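/- arXiv:1311.2477 — 6 statements merged into one kernel-verified Lean document; each statement's English description precedes it below -/
import Mathlib

section
/- Let T > 0, S ∈ ℕ, and let f : ℝ × ℝ³ → ℂ be smooth with compact support such that every partial derivative of f of order at most S vanishes at every point of the axis {(x₀, 0) : x₀ ∈ ℝ}. Then there exists a constant C > 0 (depending on f, S and T) such that for every λ > 0, ∫_{[0,T]×ℝ³} (|f(x₀, x̲)| · exp(−λ|x̲|²))² dx₀ dx̲ ≤ C · λ^{−(S+1) − 3/2}. -/
/-!
Vanishing to order `S` along the axis, together with a bound on the derivatives of order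
`S + 1`, gives `|f(x₀, x̲)| ≤ M |x̲|^(S+1)` by `S + 1` applications of the mean value
inequality along the segments `[(x₀, 0), (x₀, x̲)]`. Writing `u = λ|x̲|²`, the square of
`|x̲|^(S+1) e^{-λ|x̲|²}` is `λ^{-(S+1)} · (u^(S+1) e^{-u}) · e^{-u}`, and `u^(S+1) e^{-u} ≤ (S+1)!`.
What is left is `λ^{-(S+1)}` times the Gaussian integral `T (π/λ)^{3/2}`.
-/

open MeasureTheory Real Set
open scoped Nat

section VanishingOnAxis

variable {E F G : Type*} [NormedAddCommGroup E] [NormedSpace ℝ E]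
  [NormedAddCommGroup F] [NormedSpace ℝ F] [NormedAddCommGroup G] [NormedSpace ℝ G]

theorem norm_le_mul_norm_snd_pow_succ {g : E × F → G} {C : ℝ} {k : ℕ} (hC : 0 ≤ C)
    (hg : Differentiable ℝ g) (hg_axis : ∀ x₀, g (x₀, 0) = 0)
    (hdg : ∀ z, ‖fderiv ℝ g z‖ ≤ C * ‖z.2‖ ^ k) (x : E × F) :
    ‖g x‖ ≤ C * ‖x.2‖ ^ (k + 1) := by
  obtain ⟨x₀, y⟩ := x
  have hdg_segment : ∀ z ∈ segment ℝ (x₀, (0 : F)) (x₀, y), ‖fderiv ℝ g z‖ ≤ C * ‖y‖ ^ k := by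
    rintro z ⟨a, b, ha, hb, hab, rfl⟩
    have hz : ‖(a • (x₀, (0 : F)) + b • (x₀, y)).2‖ ≤ ‖y‖ := by
      simp only [Prod.snd_add, Prod.smul_snd, smul_zero, zero_add, norm_smul,
        Real.norm_eq_abs, abs_of_nonneg hb]
      nlinarith [norm_nonneg y]
    exact (hdg _).trans (by gcongr)
  have h := (convex_segment _ _).norm_image_sub_le_of_norm_fderiv_le (fun z _ => hg z)
    hdg_segment (left_mem_segment ℝ _ _) (right_mem_segment ℝ _ _)
  simpa [hg_axis, Prod.norm_def, pow_succ, mul_assoc] using h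

theorem norm_iteratedFDeriv_le_mul_norm_snd_pow {f : E × F → G} {N : ℕ} {C : ℝ}
    (hf : ContDiff ℝ N f) (hC : ∀ x, ‖iteratedFDeriv ℝ N f x‖ ≤ C)
    (h_axis : ∀ n < N, ∀ x₀, iteratedFDeriv ℝ n f (x₀, 0) = 0) :
    ∀ k ≤ N, ∀ x, ‖iteratedFDeriv ℝ (N - k) f x‖ ≤ C * ‖x.2‖ ^ k := by
  intro k
  induction k with
  | zero => simpa using hC
  | succ k ih =>
    intro hk x
    obtain ⟨m, rfl⟩ : ∃ m, N = m + (k + 1) := ⟨N - (k + 1), by omega⟩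
    have hm : m + (k + 1) - (k + 1) = m := by omega
    have hm' : m + (k + 1) - k = m + 1 := by omega
    rw [hm]
    refine norm_le_mul_norm_snd_pow_succ ((norm_nonneg _).trans (hC x))
      (hf.differentiable_iteratedFDeriv (by norm_cast; omega)) (h_axis m (by omega))
      (fun z => ?_) x
    rw [norm_fderiv_iteratedFDeriv, ← hm']
    exact ih (by omega) z

theorem exists_norm_le_mul_norm_snd_pow_of_hasCompactSupport {f : E × F → G} {N : ℕ}
    (hf : ContDiff ℝ N f) (hsupp : HasCompactSupport f)
    (h_axis : ∀ n < N, ∀ x₀, iteratedFDeriv ℝ n f (x₀, 0) = 0) :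
    ∃ M > 0, ∀ x, ‖f x‖ ≤ M * ‖x.2‖ ^ N := by
  obtain ⟨C, hC⟩ := (hsupp.iteratedFDeriv N).exists_bound_of_continuous
    (hf.continuous_iteratedFDeriv le_rfl)
  refine ⟨max C 1, by positivity, fun x => ?_⟩
  have := norm_iteratedFDeriv_le_mul_norm_snd_pow hf
    (fun x => (hC x).trans (le_max_left C 1)) h_axis N le_rfl x
  rwa [Nat.sub_self, norm_iteratedFDeriv_zero] at this

end VanishingOnAxis

theorem sq_pow_mul_exp_neg_mul_sq_le {lam : ℝ} (hlam : 0 < lam) (n : ℕ) (r : ℝ) :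
    (r ^ n * exp (-lam * r ^ 2)) ^ 2 ≤ n ! / lam ^ n * exp (-lam * r ^ 2) := by
  have hu : (lam * r ^ 2) ^ n * exp (-lam * r ^ 2) ≤ n ! := by
    have := pow_div_factorial_le_exp _ (by positivity : 0 ≤ lam * r ^ 2) n
    rw [div_le_iff₀ (by positivity)] at this
    calc _ ≤ exp (lam * r ^ 2) * n ! * exp (-lam * r ^ 2) := by gcongr
      _ = n ! := by
        rw [mul_comm (exp _), mul_assoc, ← exp_add, neg_mul, add_neg_cancel, exp_zero, mul_one]
  calc (r ^ n * exp (-lam * r ^ 2)) ^ 2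
      = (lam * r ^ 2) ^ n * exp (-lam * r ^ 2) / lam ^ n * exp (-lam * r ^ 2) := by
        field_simp
        ring
    _ ≤ n ! / lam ^ n * exp (-lam * r ^ 2) := by gcongr

section GaussianIntegral

variable {V : Type*} [NormedAddCommGroup V] [InnerProductSpace ℝ V] [FiniteDimensional ℝ V]
  [MeasurableSpace V] [BorelSpace V] {T lam : ℝ}

theorem integral_Icc_prod_univ_exp_neg_mul_sq_norm_snd (hT : 0 ≤ T) (hlam : 0 < lam) :
    ∫ x in Icc 0 T ×ˢ (univ : Set V), exp (-lam * ‖x.2‖ ^ 2) =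
      T * (π / lam) ^ (Module.finrank ℝ V / 2 : ℝ) := by
  rw [Measure.volume_eq_prod, ← Measure.prod_restrict, Measure.restrict_univ,
    integral_fun_snd (fun v : V => exp (-lam * ‖v‖ ^ 2)),
    GaussianFourier.integral_rexp_neg_mul_sq_norm hlam,
    measureReal_restrict_apply_univ, volume_real_Icc_of_le hT, sub_zero, smul_eq_mul]

theorem integrableOn_Icc_prod_univ_exp_neg_mul_sq_norm_snd (hT : 0 < T) (hlam : 0 < lam) :
    IntegrableOn (fun x : ℝ × V => exp (-lam * ‖x.2‖ ^ 2)) (Icc 0 T ×ˢ univ) :=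
  Integrable.of_integral_ne_zero <| by
    rw [integral_Icc_prod_univ_exp_neg_mul_sq_norm_snd hT.le hlam]
    positivity

end GaussianIntegral

/-- Lemma 2.3 of the paper: exponential damping through the Gaussian factor.
If `f` is smooth, compactly supported and vanishes to order `S` along the axis
`{(x₀, 0)}`, then the squared `L²`-type integral of `|f| e^{-λ|x̲|²}` over
`[0,T] × ℝ³` is bounded by `C λ^{-(S+1)-3/2}`. -/
theorem gaussian_damping_sq
    (T : ℝ) (hT : 0 < T) (S : ℕ)
    (f : ℝ × EuclideanSpace ℝ (Fin 3) → ℂ)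
    (hf : ContDiff ℝ (⊤ : ℕ∞) f)
    (hsupp : HasCompactSupport f)
    (hvan : ∀ n : ℕ, n ≤ S → ∀ x₀ : ℝ,
      iteratedFDeriv ℝ n f (x₀, (0 : EuclideanSpace ℝ (Fin 3))) = 0) :
    ∃ C > 0, ∀ lam : ℝ, 0 < lam →
      (∫ x in (Set.Icc (0 : ℝ) T) ×ˢ (Set.univ : Set (EuclideanSpace ℝ (Fin 3))),
          (‖f x‖ * Real.exp (-lam * ‖x.2‖ ^ 2)) ^ 2) ≤
        C * lam ^ (-(S + 1 : ℝ) - 3 / 2) := by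
  obtain ⟨M, hM, hfM⟩ := exists_norm_le_mul_norm_snd_pow_of_hasCompactSupport (N := S + 1)
    (hf.of_le (by exact_mod_cast le_top)) hsupp fun n hn => hvan n (by omega)
  refine ⟨M ^ 2 * (S + 1)! * T * π ^ (3 / 2 : ℝ), by positivity, fun lam hlam => ?_⟩
  set A := M ^ 2 * ((S + 1)! / lam ^ (S + 1)) with hA
  have hpointwise : ∀ x : ℝ × EuclideanSpace ℝ (Fin 3),
      (‖f x‖ * exp (-lam * ‖x.2‖ ^ 2)) ^ 2 ≤ A * exp (-lam * ‖x.2‖ ^ 2) := fun x =>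
    calc (‖f x‖ * exp (-lam * ‖x.2‖ ^ 2)) ^ 2
        ≤ M ^ 2 * (‖x.2‖ ^ (S + 1) * exp (-lam * ‖x.2‖ ^ 2)) ^ 2 := by
          rw [← mul_pow, ← mul_assoc]; gcongr; exact hfM x
      _ ≤ A * exp (-lam * ‖x.2‖ ^ 2) := by
          rw [mul_assoc]; gcongr; exact sq_pow_mul_exp_neg_mul_sq_le hlam _ _
  have hrpow : lam ^ (-(S + 1 : ℝ) - 3 / 2) = (lam ^ (S + 1))⁻¹ * (lam ^ (3 / 2 : ℝ))⁻¹ := by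
    rw [sub_eq_add_neg, rpow_add hlam, rpow_neg hlam.le, rpow_neg hlam.le, ← Nat.cast_add_one,
      rpow_natCast]
  calc _ ≤ ∫ x in Icc 0 T ×ˢ univ, A * exp (-lam * ‖x.2‖ ^ 2) :=
        integral_mono_of_nonneg (.of_forall fun x => by positivity)
          ((integrableOn_Icc_prod_univ_exp_neg_mul_sq_norm_snd hT hlam).const_mul A)
          (.of_forall hpointwise)
    _ = A * (T * (π / lam) ^ (3 / 2 : ℝ)) := by
        rw [integral_const_mul, integral_Icc_prod_univ_exp_neg_mul_sq_norm_snd hT.le hlam,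
          finrank_euclideanSpace_fin]
        norm_num
    _ = _ := by
        rw [hA, hrpow, div_rpow pi_pos.le hlam.le]
        field_simp
end

section
/- Let T > 0, S ∈ ℕ, and let f : ℝ × ℝ³ → ℂ be smooth with compact support such that every partial derivative of f of order at most S vanishes at every point of the axis {(x₀, 0) : x₀ ∈ ℝ}. Then there exists a constant C > 0 (depending on f, S and T) such that for every λ > 0, ∫_{[0,T]×ℝ³} |f(x₀, x̲)| · exp(−2λ|x̲|²) dx₀ dx̲ ≤ C · λ^{−(S+1)/2 − 3/2}. -/
/-!
A bound `M` on `D^{S+1} f` together with vanishing to order `S` on the axis gives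
`‖f (x₀, y)‖ ≤ M ‖y‖^{S+1}`, by iterating the mean value inequality in the transverse direction
`y`. The integral is then at most `|[0,T]| M ∫ ‖y‖^{S+1} e^{-2λ‖y‖²} dy`, and the substitution
`y ↦ λ^{-1/2} y` shows that this last integral is `λ^{-(S+1)/2 - 3/2}` times its value at `λ = 1`.
-/

open MeasureTheory Set Module

-- A single universe, so that the induction in `VanishesToOrderOnAxis.norm_le` can pass to
-- `fderiv ℝ g : E × V → (E × V →L[ℝ] F)`.
universe u

section AxisVanishing

variable {E V F : Type u} [NormedAddCommGroup E] [NormedSpace ℝ E] [NormedAddCommGroup V]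
  [NormedSpace ℝ V] [NormedAddCommGroup F] [NormedSpace ℝ F]

def VanishesToOrderOnAxis (S : ℕ) (g : E × V → F) : Prop :=
  ∀ k ≤ S, ∀ x₀ : E, iteratedFDeriv ℝ k g (x₀, 0) = 0

theorem VanishesToOrderOnAxis.apply_eq_zero {S : ℕ} {g : E × V → F}
    (hg : VanishesToOrderOnAxis S g) (x₀ : E) : g (x₀, 0) = 0 := by
  rw [← norm_eq_zero, ← norm_iteratedFDeriv_zero (𝕜 := ℝ), hg 0 S.zero_le x₀, norm_zero]

theorem VanishesToOrderOnAxis.fderiv {S : ℕ} {g : E × V → F}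
    (hg : VanishesToOrderOnAxis (S + 1) g) : VanishesToOrderOnAxis S (fderiv ℝ g) := by
  intro k hk x₀
  rw [← norm_eq_zero, norm_iteratedFDeriv_fderiv, hg (k + 1) (by omega) x₀, norm_zero]

theorem norm_le_mul_norm_pow_succ_of_norm_fderiv_le {g : E × V → F} (hg : Differentiable ℝ g)
    {n : ℕ} {M : ℝ} (hM : 0 ≤ M) (hg₀ : ∀ x₀, g (x₀, 0) = 0)
    (hdg : ∀ x₀ y, ‖fderiv ℝ g (x₀, y)‖ ≤ M * ‖y‖ ^ n) (x₀ : E) (y : V) :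
    ‖g (x₀, y)‖ ≤ M * ‖y‖ ^ (n + 1) := by
  have hbound : ∀ p ∈ ({x₀} : Set E) ×ˢ Metric.closedBall (0 : V) ‖y‖,
      ‖fderiv ℝ g p‖ ≤ M * ‖y‖ ^ n := by
    rintro ⟨x, z⟩ ⟨rfl, hz⟩
    refine (hdg _ z).trans ?_
    gcongr
    simpa using hz
  have := (convex_singleton x₀).prod (convex_closedBall (0 : V) ‖y‖)
    |>.norm_image_sub_le_of_norm_fderiv_le (fun p _ => hg p) hbound
    (x := (x₀, 0)) (y := (x₀, y)) ⟨rfl, by simp⟩ ⟨rfl, by simp⟩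
  simpa [hg₀, pow_succ, mul_assoc] using this

theorem VanishesToOrderOnAxis.norm_le {S : ℕ} {g : E × V → F} (hvan : VanishesToOrderOnAxis S g)
    (hg : ContDiff ℝ (S + 1) g) {M : ℝ} (hM : ∀ p, ‖iteratedFDeriv ℝ (S + 1) g p‖ ≤ M)
    (x₀ : E) (y : V) : ‖g (x₀, y)‖ ≤ M * ‖y‖ ^ (S + 1) := by
  have hM₀ : 0 ≤ M := (norm_nonneg _).trans (hM 0)
  revert x₀ y
  induction S generalizing F with
  | zero =>
    refine norm_le_mul_norm_pow_succ_of_norm_fderiv_le (hg.differentiable (by simp)) hM₀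
      hvan.apply_eq_zero fun x₀ y => ?_
    simpa [← norm_iteratedFDeriv_zero (𝕜 := ℝ) (f := fderiv ℝ g), norm_iteratedFDeriv_fderiv]
      using hM (x₀, y)
  | succ S ih =>
    refine norm_le_mul_norm_pow_succ_of_norm_fderiv_le (hg.differentiable (by simp)) hM₀
      hvan.apply_eq_zero (ih hvan.fderiv (hg.fderiv_right le_rfl) fun p => ?_)
    simpa [norm_iteratedFDeriv_fderiv] using hM p

end AxisVanishing

section RadialGaussian

variable {V : Type*} [NormedAddCommGroup V] [NormedSpace ℝ V] [MeasurableSpace V] [BorelSpace V]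
  [FiniteDimensional ℝ V] (μ : Measure V) [μ.IsAddHaarMeasure]

theorem integrable_norm_pow_mul_exp_neg_mul_sq_norm [Nontrivial V] (n : ℕ) {b : ℝ} (hb : 0 < b) :
    Integrable (fun y => ‖y‖ ^ n * Real.exp (-b * ‖y‖ ^ 2)) μ := by
  refine (integrable_fun_norm_addHaar μ (f := fun t => t ^ n * Real.exp (-b * t ^ 2))).2 ?_
  have := integrableOn_rpow_mul_exp_neg_mul_sq hb (s := (finrank ℝ V - 1 + n : ℕ))
    (neg_one_lt_zero.trans_le (Nat.cast_nonneg _))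
  simpa only [smul_eq_mul, Real.rpow_natCast, pow_add, mul_assoc] using this

theorem integral_norm_pow_mul_comp_mul_sq_norm (φ : ℝ → ℝ) (n : ℕ) {lam : ℝ} (hlam : 0 < lam) :
    ∫ y, ‖y‖ ^ n * φ (lam * ‖y‖ ^ 2) ∂μ =
      lam ^ (-(n + finrank ℝ V : ℝ) / 2) * ∫ y, ‖y‖ ^ n * φ (‖y‖ ^ 2) ∂μ := by
  set c := lam ^ (-(1 : ℝ) / 2) with hc
  have hc₀ : 0 < c := Real.rpow_pos_of_pos hlam _
  have hc_pow (k : ℕ) : c ^ k = lam ^ (-(k : ℝ) / 2) := by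
    rw [hc, ← Real.rpow_natCast, ← Real.rpow_mul hlam.le]
    ring_nf
  have hlam_c : lam * c ^ 2 = 1 := by
    rw [hc_pow]
    norm_num [Real.rpow_neg_one, hlam.ne']
  have hscale := Measure.integral_comp_smul μ (fun y => ‖y‖ ^ n * φ (lam * ‖y‖ ^ 2)) c
  simp only [norm_smul, Real.norm_of_nonneg hc₀.le, mul_pow, ← mul_assoc, hlam_c, one_mul] at hscale
  simp only [mul_assoc, integral_const_mul] at hscale
  rw [abs_of_pos (by positivity), smul_eq_mul,
    eq_inv_mul_iff_mul_eq₀ (by positivity)] at hscale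
  rw [← hscale, ← mul_assoc, ← pow_add, hc_pow]
  push_cast
  ring_nf

end RadialGaussian

theorem gaussian_damping_L1_general
    (T : ℝ) (S : ℕ)
    (f : ℝ × EuclideanSpace ℝ (Fin 3) → ℂ)
    (hf : ContDiff ℝ (⊤ : ℕ∞) f)
    (hsupp : HasCompactSupport f)
    (hvan : ∀ n : ℕ, n ≤ S → ∀ x₀ : ℝ,
      iteratedFDeriv ℝ n f (x₀, (0 : EuclideanSpace ℝ (Fin 3))) = 0) :
    ∃ C > 0, ∀ lam : ℝ, 0 < lam →
      (∫ x in (Set.Icc (0 : ℝ) T) ×ˢ (Set.univ : Set (EuclideanSpace ℝ (Fin 3))),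
          ‖f x‖ * Real.exp (-2 * lam * ‖x.2‖ ^ 2)) ≤
        C * lam ^ (-(S + 1 : ℝ) / 2 - 3 / 2) := by
  obtain ⟨M, hM⟩ := (hsupp.iteratedFDeriv (S + 1)).exists_bound_of_continuous
    (hf.continuous_iteratedFDeriv (by exact_mod_cast le_top))
  have hf_le (x) : ‖f x‖ ≤ M * ‖x.2‖ ^ (S + 1) :=
    VanishesToOrderOnAxis.norm_le hvan (hf.of_le (by exact_mod_cast le_top)) hM x.1 x.2
  set J := ∫ y : EuclideanSpace ℝ (Fin 3), ‖y‖ ^ (S + 1) * Real.exp (-2 * ‖y‖ ^ 2)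
  refine ⟨max (volume.real (Icc (0 : ℝ) T) * M * J) 1, by positivity, fun lam hlam => ?_⟩
  have hgauss : Integrable fun y : EuclideanSpace ℝ (Fin 3) =>
      ‖y‖ ^ (S + 1) * Real.exp (-2 * (lam * ‖y‖ ^ 2)) := by
    simpa only [neg_mul, mul_assoc] using
      integrable_norm_pow_mul_exp_neg_mul_sq_norm volume (S + 1) (mul_pos two_pos hlam)
  rw [Measure.volume_eq_prod, ← Measure.prod_restrict, Measure.restrict_univ]
  calc _ ≤ ∫ x, M * (‖x.2‖ ^ (S + 1) * Real.exp (-2 * (lam * ‖x.2‖ ^ 2)))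
          ∂(volume.restrict (Icc 0 T)).prod volume :=
        integral_mono_of_nonneg (.of_forall fun x => by positivity)
          ((hgauss.const_mul M).comp_snd _) (.of_forall fun x =>
            (mul_le_mul_of_nonneg_right (hf_le x) (Real.exp_pos _).le).trans_eq (by ring_nf))
    _ = volume.real (Icc (0 : ℝ) T) * M * J * lam ^ (-(S + 1 : ℝ) / 2 - 3 / 2) := by
        rw [integral_const_mul, integral_fun_snd fun y : EuclideanSpace ℝ (Fin 3) =>
            ‖y‖ ^ (S + 1) * Real.exp (-2 * (lam * ‖y‖ ^ 2)),
          integral_norm_pow_mul_comp_mul_sq_norm volume (fun t => Real.exp (-2 * t)) _ hlam]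
        simp only [finrank_euclideanSpace_fin, measureReal_restrict_apply_univ, smul_eq_mul]
        rw [show -(((S + 1 : ℕ) : ℝ) + (3 : ℕ)) / 2 = -(S + 1 : ℝ) / 2 - 3 / 2 by push_cast; ring]
        ring
    _ ≤ _ := by gcongr; exact le_max_left _ _

/-- The reformulation of Lemma 2.3 used in Section 2.3 of the paper:
if `f` is smooth, compactly supported and vanishes to order `S` along the axis
`{(x₀, 0)}`, then the integral of `|f| e^{-2λ|x̲|²}` over `[0,T] × ℝ³` is bounded
by `C λ^{-(S+1)/2 - 3/2}`. -/
theorem gaussian_damping_L1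
    (T : ℝ) (hT : 0 < T) (S : ℕ)
    (f : ℝ × EuclideanSpace ℝ (Fin 3) → ℂ)
    (hf : ContDiff ℝ (⊤ : ℕ∞) f)
    (hsupp : HasCompactSupport f)
    (hvan : ∀ n : ℕ, n ≤ S → ∀ x₀ : ℝ,
      iteratedFDeriv ℝ n f (x₀, (0 : EuclideanSpace ℝ (Fin 3))) = 0) :
    ∃ C > 0, ∀ lam : ℝ, 0 < lam →
      (∫ x in (Set.Icc (0 : ℝ) T) ×ˢ (Set.univ : Set (EuclideanSpace ℝ (Fin 3))),
          ‖f x‖ * Real.exp (-2 * lam * ‖x.2‖ ^ 2)) ≤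
        C * lam ^ (-(S + 1 : ℝ) / 2 - 3 / 2) :=
  gaussian_damping_L1_general T S f hf hsupp hvan
end

section
/- Let J, V : ℝ → M₄(ℂ) be differentiable maps solving the linear system (⋆), i.e. J′(s) = B(s)ᵀ J(s) + C(s) V(s) and V′(s) = −A(s) J(s) − B(s) V(s), with J(0) = Id and V(0) = M₀ where M₀ ∈ M₄(ℂ) satisfies M₀ᵀ = M₀. Then for every f ∈ ℂ⁴ and every s ∈ ℝ, (J(s)f) · conj(V(s)f) − (V(s)f) · conj(J(s)f) = −2i · Σ_{μ,ν} (Im M₀)_{μν} f_μ conj(f_ν). -/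
/-!
The pairing `ω(u, v) = u·conj v - v·conj u` is conserved along (⋆). Since `A`, `B`, `C` are real,
conjugation commutes with them, so `ω(Bᵀu, v) = ω(u, Bv)` and the two `B`-terms of the derivative
cancel, while symmetry of `A` and `C` together with antisymmetry of `ω` gives
`ω(Au, u) = ω(Cv, v) = 0`. Hence `ω(J(s)f, V(s)f) = ω(f, M₀f)`, and for symmetric `M₀` this equals
`Σ (conj M₀ - M₀)_{μν} f_μ conj f_ν = -2i Σ (Im M₀)_{μν} f_μ conj f_ν`.
-/

open Matrix

/-- Entrywise coercion of a real matrix to a complex matrix. -/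
noncomputable def matC (A : Matrix (Fin 4) (Fin 4) ℝ) : Matrix (Fin 4) (Fin 4) ℂ :=
  A.map Complex.ofReal

section SymplecticPairing

variable {n : Type*} [Fintype n]

def symplecticPairing (u v : n → ℂ) : ℂ := u ⬝ᵥ star v - v ⬝ᵥ star u

theorem symplecticPairing_swap (u v : n → ℂ) :
    symplecticPairing v u = -symplecticPairing u v := by
  simp only [symplecticPairing, neg_sub]

theorem symplecticPairing_add_left (u₁ u₂ v : n → ℂ) :
    symplecticPairing (u₁ + u₂) v = symplecticPairing u₁ v + symplecticPairing u₂ v := by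
  simp only [symplecticPairing, add_dotProduct, star_add, dotProduct_add]
  ring

theorem symplecticPairing_sub_right (u v₁ v₂ : n → ℂ) :
    symplecticPairing u (v₁ - v₂) = symplecticPairing u v₁ - symplecticPairing u v₂ := by
  simp only [symplecticPairing, sub_dotProduct, star_sub, dotProduct_sub]
  ring

theorem symplecticPairing_neg_right (u v : n → ℂ) :
    symplecticPairing u (-v) = -symplecticPairing u v := by
  simp only [symplecticPairing, neg_dotProduct, star_neg, dotProduct_neg]
  ring

theorem star_map_ofReal_mulVec (M : Matrix n n ℝ) (x : n → ℂ) :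
    star (M.map Complex.ofReal *ᵥ x) = M.map Complex.ofReal *ᵥ star x := by
  ext i
  simp [mulVec, dotProduct, star_sum]

theorem symplecticPairing_transpose_mulVec_left (M : Matrix n n ℝ) (x y : n → ℂ) :
    symplecticPairing ((M.map Complex.ofReal)ᵀ *ᵥ x) y =
      symplecticPairing x (M.map Complex.ofReal *ᵥ y) := by
  have hadj (a b : n → ℂ) :
      ((M.map Complex.ofReal)ᵀ *ᵥ a) ⬝ᵥ b = a ⬝ᵥ (M.map Complex.ofReal *ᵥ b) := by
    rw [mulVec_transpose, dotProduct_mulVec]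
  simp only [symplecticPairing]
  rw [hadj, star_map_ofReal_mulVec M y, ← transpose_map, star_map_ofReal_mulVec, transpose_map,
    dotProduct_comm y, hadj, dotProduct_comm (star x)]

theorem symplecticPairing_mulVec_self_of_transpose_eq {M : Matrix n n ℝ} (hM : Mᵀ = M)
    (x : n → ℂ) : symplecticPairing (M.map Complex.ofReal *ᵥ x) x = 0 := by
  have h := symplecticPairing_transpose_mulVec_left M x x
  rw [← transpose_map, hM, symplecticPairing_swap] at h
  rw [symplecticPairing_swap]
  linear_combination h / 2

theorem symplecticPairing_flow_eq_zero {A C : Matrix n n ℝ} (hA : Aᵀ = A) (hC : Cᵀ = C)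
    (B : Matrix n n ℝ) (u v : n → ℂ) :
    symplecticPairing ((B.map Complex.ofReal)ᵀ *ᵥ u + C.map Complex.ofReal *ᵥ v) v +
      symplecticPairing u (-A.map Complex.ofReal *ᵥ u - B.map Complex.ofReal *ᵥ v) = 0 := by
  rw [symplecticPairing_add_left, symplecticPairing_sub_right, neg_mulVec,
    symplecticPairing_neg_right, symplecticPairing_transpose_mulVec_left,
    symplecticPairing_mulVec_self_of_transpose_eq hC,
    symplecticPairing_swap (A.map Complex.ofReal *ᵥ u) u,
    symplecticPairing_mulVec_self_of_transpose_eq hA]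
  ring

theorem HasDerivAt.dotProduct_star {u v : ℝ → n → ℂ} {u' v' : n → ℂ} {t : ℝ}
    (hu : HasDerivAt u u' t) (hv : HasDerivAt v v' t) :
    HasDerivAt (fun t => u t ⬝ᵥ star (v t)) (u' ⬝ᵥ star (v t) + u t ⬝ᵥ star v') t := by
  simp only [dotProduct, ← Finset.sum_add_distrib]
  exact HasDerivAt.fun_sum fun i _ => (hasDerivAt_pi.1 hu i).mul (hasDerivAt_pi.1 hv i).star

theorem HasDerivAt.symplecticPairing {u v : ℝ → n → ℂ} {u' v' : n → ℂ} {t : ℝ}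
    (hu : HasDerivAt u u' t) (hv : HasDerivAt v v' t) :
    HasDerivAt (fun t => symplecticPairing (u t) (v t))
      (symplecticPairing u' (v t) + symplecticPairing (u t) v') t :=
  ((hu.dotProduct_star hv).fun_sub (hv.dotProduct_star hu)).congr_deriv <| by
    simp only [_root_.symplecticPairing]
    ring

theorem hasDerivAt_mulVec_of_entries {M : ℝ → Matrix n n ℂ} {M' : Matrix n n ℂ} {t : ℝ}
    (hM : ∀ i j, HasDerivAt (fun t => M t i j) (M' i j) t) (f : n → ℂ) :
    HasDerivAt (fun t => M t *ᵥ f) (M' *ᵥ f) t :=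
  hasDerivAt_pi.2 fun i => HasDerivAt.fun_sum fun j _ => (hM i j).mul_const (f j)

theorem symplecticPairing_mulVec_solution_eq {A B C : ℝ → Matrix n n ℝ}
    (hAsymm : ∀ s, (A s)ᵀ = A s) (hCsymm : ∀ s, (C s)ᵀ = C s) {J V : ℝ → Matrix n n ℂ}
    (hJ : ∀ (s : ℝ) (i j : n), HasDerivAt (fun t => J t i j)
      ((((B s).map Complex.ofReal)ᵀ * J s + (C s).map Complex.ofReal * V s) i j) s)
    (hV : ∀ (s : ℝ) (i j : n), HasDerivAt (fun t => V t i j)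
      ((-(A s).map Complex.ofReal * J s - (B s).map Complex.ofReal * V s) i j) s)
    (f : n → ℂ) (s : ℝ) :
    symplecticPairing (J s *ᵥ f) (V s *ᵥ f) = symplecticPairing (J 0 *ᵥ f) (V 0 *ᵥ f) := by
  have hderiv : ∀ t, HasDerivAt (fun t => symplecticPairing (J t *ᵥ f) (V t *ᵥ f)) 0 t := by
    intro t
    have hpair := (hasDerivAt_mulVec_of_entries (hJ t) f).symplecticPairing
      (hasDerivAt_mulVec_of_entries (hV t) f)
    rwa [add_mulVec, sub_mulVec, ← mulVec_mulVec, ← mulVec_mulVec, ← mulVec_mulVec,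
      ← mulVec_mulVec, symplecticPairing_flow_eq_zero (hAsymm t) (hCsymm t)] at hpair
  exact is_const_of_deriv_eq_zero (fun t => (hderiv t).differentiableAt)
    (fun t => (hderiv t).deriv) s 0

theorem symplecticPairing_mulVec_of_transpose_eq {M : Matrix n n ℂ} (hM : Mᵀ = M)
    (f : n → ℂ) :
    symplecticPairing f (M *ᵥ f) =
      -2 * Complex.I * ∑ μ, ∑ ν, (((M μ ν).im : ℝ) : ℂ) * f μ * star (f ν) := by
  rw [symplecticPairing, dotProduct_comm (M *ᵥ f), dotProduct_mulVec, ← mulVec_transpose, hM]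
  simp only [dotProduct, mulVec, Pi.star_apply, star_sum, star_mul', Finset.mul_sum,
    Finset.sum_mul, ← Finset.sum_sub_distrib, Complex.star_def]
  refine Finset.sum_congr rfl fun μ _ => Finset.sum_congr rfl fun ν _ => ?_
  have him := Complex.sub_conj (M μ ν)
  push_cast at him
  linear_combination (-(f μ * (starRingEnd ℂ) (f ν))) * him

end SymplecticPairing

theorem symplectic_pairing_value_general
    (A B C : ℝ → Matrix (Fin 4) (Fin 4) ℝ)
    (hAsymm : ∀ s : ℝ, (A s)ᵀ = A s)
    (hCsymm : ∀ s : ℝ, (C s)ᵀ = C s)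
    (J V : ℝ → Matrix (Fin 4) (Fin 4) ℂ)
    (hJ : ∀ (s : ℝ) (i j : Fin 4), HasDerivAt (fun t => J t i j)
      (((matC (B s))ᵀ * J s + matC (C s) * V s) i j) s)
    (hV : ∀ (s : ℝ) (i j : Fin 4), HasDerivAt (fun t => V t i j)
      ((-(matC (A s)) * J s - matC (B s) * V s) i j) s)
    (M₀ : Matrix (Fin 4) (Fin 4) ℂ) (hM₀ : M₀ᵀ = M₀)
    (hJ0 : J 0 = 1) (hV0 : V 0 = M₀) :
    ∀ (f : Fin 4 → ℂ) (s : ℝ),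
      (∑ i : Fin 4, (J s *ᵥ f) i * star ((V s *ᵥ f) i))
        - (∑ i : Fin 4, (V s *ᵥ f) i * star ((J s *ᵥ f) i)) =
      -2 * Complex.I *
        ∑ μ : Fin 4, ∑ ν : Fin 4, (((M₀ μ ν).im : ℝ) : ℂ) * f μ * star (f ν) := by
  intro f s
  change symplecticPairing (J s *ᵥ f) (V s *ᵥ f) = _
  rw [symplecticPairing_mulVec_solution_eq hAsymm hCsymm hJ hV, hJ0, hV0, one_mulVec]
  exact symplecticPairing_mulVec_of_transpose_eq hM₀ f

/-- The computation in Section 2.2 of the paper: for the matrix solution `(J, V)`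
of the linearised system with `J(0) = Id`, `V(0) = M₀` (`M₀` symmetric), one has
`(Jf)·conj(Vf) - (Vf)·conj(Jf) = -2i Σ (Im M₀)_{μν} f_μ conj(f_ν)` for all `s`. -/
theorem symplectic_pairing_value
    (A B C : ℝ → Matrix (Fin 4) (Fin 4) ℝ)
    (hAcont : ∀ i j : Fin 4, Continuous fun s => A s i j)
    (hBcont : ∀ i j : Fin 4, Continuous fun s => B s i j)
    (hCcont : ∀ i j : Fin 4, Continuous fun s => C s i j)
    (hAsymm : ∀ s : ℝ, (A s)ᵀ = A s)
    (hCsymm : ∀ s : ℝ, (C s)ᵀ = C s)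
    (J V : ℝ → Matrix (Fin 4) (Fin 4) ℂ)
    (hJ : ∀ (s : ℝ) (i j : Fin 4), HasDerivAt (fun t => J t i j)
      (((matC (B s))ᵀ * J s + matC (C s) * V s) i j) s)
    (hV : ∀ (s : ℝ) (i j : Fin 4), HasDerivAt (fun t => V t i j)
      ((-(matC (A s)) * J s - matC (B s) * V s) i j) s)
    (M₀ : Matrix (Fin 4) (Fin 4) ℂ) (hM₀ : M₀ᵀ = M₀)
    (hJ0 : J 0 = 1) (hV0 : V 0 = M₀) :
    ∀ (f : Fin 4 → ℂ) (s : ℝ),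
      (∑ i : Fin 4, (J s *ᵥ f) i * star ((V s *ᵥ f) i))
        - (∑ i : Fin 4, (V s *ᵥ f) i * star ((J s *ᵥ f) i)) =
      -2 * Complex.I *
        ∑ μ : Fin 4, ∑ ν : Fin 4, (((M₀ μ ν).im : ℝ) : ℂ) * f μ * star (f ν) :=
  symplectic_pairing_value_general A B C hAsymm hCsymm J V hJ hV M₀ hM₀ hJ0 hV0
end

section
/- Let J, V : ℝ → M₄(ℂ) be differentiable maps solving the linear system (⋆), i.e. J′(s) = B(s)ᵀ J(s) + C(s) V(s) and V′(s) = −A(s) J(s) − B(s) V(s), with J(0) = Id and V(0) = M₀ where M₀ᵀ = M₀. Let (j, v) : ℝ → ℝ⁴ × ℝ⁴ be a differentiable real-valued solution of (⋆) such that j(s) ≠ 0 for every s ∈ ℝ and v(0) = M₀ · j(0) (in particular M₀ j(0) is real). Assume there exists a 3-dimensional real subspace W ⊆ ℝ⁴ with W ⊕ ℝ·j(0) = ℝ⁴ such that xᵀ (Im M₀) x > 0 for every nonzero x ∈ W. Then J(s) is invertible for every s ∈ ℝ. -/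
/-!
Suppose `J s₀ *ᵥ w = 0` with `w ≠ 0`. Then `(p, q) = (J w, V w)` solves the system and
`p s₀ = 0`. The coefficients are real and `A`, `C` symmetric, so the symplectic pairing of
`(p, q)` with its complex conjugate is conserved: `Im (w̄ᵀ M₀ w) = Im (p̄ᵀ q)(s₀) = 0`. Now
`Im M₀` kills `j 0` (because `M₀ (j 0) = v 0` is real) and is positive on the complement `W`,
so it is positive semidefinite with isotropic vectors exactly `ℝ (j 0)`; writing
`Im (w̄ᵀ M₀ w) = xᵀ (Im M₀) x + yᵀ (Im M₀) y` for `w = x + i y` forces `w ∈ ℂ (j 0)`, hence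
`J s₀ *ᵥ j 0 = 0`. But by uniqueness for the linear system `J s *ᵥ j 0 = j s`, which never
vanishes.
-/

open Matrix

open Set

section

variable {n : Type*} [Fintype n] {𝕜 : Type*} [RCLike 𝕜]

theorem HasDerivAt.dotProduct {f g : ℝ → n → 𝕜} {f' g' : n → 𝕜} {x : ℝ}
    (hf : HasDerivAt f f' x) (hg : HasDerivAt g g' x) :
    HasDerivAt (fun t => f t ⬝ᵥ g t) (f' ⬝ᵥ g x + f x ⬝ᵥ g') x := by
  simp only [_root_.dotProduct, ← Finset.sum_add_distrib]
  exact HasDerivAt.fun_sum fun i _ => (hasDerivAt_pi.1 hf i).mul (hasDerivAt_pi.1 hg i)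

theorem hasDerivAt_mulVec_const {M : ℝ → Matrix n n 𝕜} {M' : Matrix n n 𝕜} {x : ℝ}
    (hM : ∀ i k, HasDerivAt (fun t => M t i k) (M' i k) x) (w : n → 𝕜) :
    HasDerivAt (fun t => M t *ᵥ w) (M' *ᵥ w) x :=
  hasDerivAt_pi.2 fun i => HasDerivAt.fun_sum fun k _ => (hM i k).mul_const (w k)

theorem ODE_linear_solution_unique {E : Type*} [NormedAddCommGroup E] [NormedSpace ℝ E]
    {L : ℝ → E →L[ℝ] E} (hL : Continuous L) {f g : ℝ → E}
    (hf : ∀ t, HasDerivAt f (L t (f t)) t) (hg : ∀ t, HasDerivAt g (L t (g t)) t)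
    {t₀ : ℝ} (heq : f t₀ = g t₀) : f = g := by
  ext t
  obtain ⟨a, b, ht, ht₀⟩ : ∃ a b, t ∈ Ioo a b ∧ t₀ ∈ Ioo a b := by
    use min t t₀ - 1, max t t₀ + 1
    grind
  obtain ⟨K, hK⟩ := (isCompact_Icc (a := a) (b := b)).exists_bound_of_continuousOn
    hL.continuousOn
  have hlip : ∀ s ∈ Ioo a b, LipschitzOnWith K.toNNReal (L s) univ := fun s hs =>
    ((L s).lipschitz.weaken (by
      rw [← NNReal.coe_le_coe, coe_nnnorm, Real.coe_toNNReal']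
      exact (hK s (Ioo_subset_Icc_self hs)).trans (le_max_left _ _))).lipschitzOnWith
  exact ODE_solution_unique_of_mem_Ioo hlip ht₀ (fun s _ => ⟨hf s, trivial⟩)
    (fun s _ => ⟨hg s, trivial⟩) heq ht

theorem Matrix.mulVec_dotProduct_of_transpose_eq {R : Type*} [CommSemiring R]
    {M : Matrix n n R} (hM : Mᵀ = M) (x y : n → R) : (M *ᵥ x) ⬝ᵥ y = x ⬝ᵥ (M *ᵥ y) := by
  rw [dotProduct_comm, ← dotProduct_transpose_mulVec, hM]

theorem Matrix.add_dotProduct_mulVec_add_of_mulVec_eq_zero {R : Type*} [CommRing R]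
    {N : Matrix n n R} (hN : Nᵀ = N) {u : n → R} (hu : N *ᵥ u = 0) (y : n → R) :
    (y + u) ⬝ᵥ N *ᵥ (y + u) = y ⬝ᵥ N *ᵥ y := by
  rw [mulVec_add, hu, add_zero, add_dotProduct, ← mulVec_dotProduct_of_transpose_eq hN u,
    hu, zero_dotProduct, add_zero]

section Degenerate

variable {N : Matrix n n ℝ} {u : n → ℝ} {W : Submodule ℝ (n → ℝ)}

theorem exists_dotProduct_mulVec_eq_of_isCompl (hN : Nᵀ = N) (hu : N *ᵥ u = 0)
    (hW : IsCompl W (Submodule.span ℝ {u})) (x : n → ℝ) :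
    ∃ y ∈ W, ∃ c : ℝ, x = y + c • u ∧ x ⬝ᵥ N *ᵥ x = y ⬝ᵥ N *ᵥ y := by
  obtain ⟨y, hy, z, hz, rfl⟩ := Submodule.mem_sup.1 (hW.sup_eq_top ▸ Submodule.mem_top (x := x))
  obtain ⟨c, rfl⟩ := Submodule.mem_span_singleton.1 hz
  refine ⟨y, hy, c, rfl, add_dotProduct_mulVec_add_of_mulVec_eq_zero hN ?_ y⟩
  rw [mulVec_smul, hu, smul_zero]

theorem dotProduct_mulVec_nonneg_of_isCompl (hN : Nᵀ = N) (hu : N *ᵥ u = 0)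
    (hW : IsCompl W (Submodule.span ℝ {u})) (hpos : ∀ x ∈ W, x ≠ 0 → 0 < x ⬝ᵥ N *ᵥ x)
    (x : n → ℝ) : 0 ≤ x ⬝ᵥ N *ᵥ x := by
  obtain ⟨y, hy, -, -, hx⟩ := exists_dotProduct_mulVec_eq_of_isCompl hN hu hW x
  rcases eq_or_ne y 0 with rfl | hy₀
  · simp [hx]
  · exact hx ▸ (hpos y hy hy₀).le

theorem mem_span_singleton_of_dotProduct_mulVec_eq_zero (hN : Nᵀ = N) (hu : N *ᵥ u = 0)
    (hW : IsCompl W (Submodule.span ℝ {u})) (hpos : ∀ x ∈ W, x ≠ 0 → 0 < x ⬝ᵥ N *ᵥ x)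
    {x : n → ℝ} (hx : x ⬝ᵥ N *ᵥ x = 0) : x ∈ Submodule.span ℝ {u} := by
  obtain ⟨y, hy, c, rfl, hxy⟩ := exists_dotProduct_mulVec_eq_of_isCompl hN hu hW x
  obtain rfl : y = 0 := by
    by_contra hy₀
    exact (hpos y hy hy₀).ne' (hxy ▸ hx)
  simpa using Submodule.smul_mem _ c (Submodule.mem_span_singleton_self u)

theorem im_star_dotProduct_mulVec {M : Matrix n n ℂ} (hM : Mᵀ = M) (w : n → ℂ) :
    (star w ⬝ᵥ M *ᵥ w).im = (fun i => (w i).re) ⬝ᵥ M.map Complex.im *ᵥ (fun i => (w i).re)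
      + (fun i => (w i).im) ⬝ᵥ M.map Complex.im *ᵥ (fun i => (w i).im) := by
  have hcross : ∑ μ, ∑ ν, (M μ ν).re * ((w μ).re * (w ν).im - (w μ).im * (w ν).re) = 0 := by
    rw [← neg_eq_self, ← Finset.sum_neg_distrib, Finset.sum_comm]
    simp only [← Finset.sum_neg_distrib]
    refine Fintype.sum_congr _ _ fun μ => Fintype.sum_congr _ _ fun ν => ?_
    rw [← transpose_apply M, hM]
    ring
  simp only [dotProduct, mulVec, Complex.im_sum, Finset.mul_sum, ← Finset.sum_add_distrib]
  rw [← sub_zero (∑ _, _), ← hcross, ← Finset.sum_sub_distrib]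
  refine Fintype.sum_congr _ _ fun μ => ?_
  rw [← Finset.sum_sub_distrib]
  refine Fintype.sum_congr _ _ fun ν => ?_
  simp only [Pi.star_apply, Complex.mul_im, Complex.mul_re, Complex.star_def, Complex.conj_re,
    Complex.conj_im, map_apply]
  ring

theorem exists_eq_smul_of_im_star_dotProduct_mulVec_eq_zero {M : Matrix n n ℂ} (hM : Mᵀ = M)
    (hu : M.map Complex.im *ᵥ u = 0) (hW : IsCompl W (Submodule.span ℝ {u}))
    (hpos : ∀ x ∈ W, x ≠ 0 → 0 < x ⬝ᵥ M.map Complex.im *ᵥ x) {w : n → ℂ}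
    (hw : (star w ⬝ᵥ M *ᵥ w).im = 0) : ∃ c : ℂ, w = c • fun i => (u i : ℂ) := by
  have hN : (M.map Complex.im)ᵀ = M.map Complex.im := by rw [← transpose_map, hM]
  rw [im_star_dotProduct_mulVec hM] at hw
  have hre := dotProduct_mulVec_nonneg_of_isCompl hN hu hW hpos fun i => (w i).re
  have him := dotProduct_mulVec_nonneg_of_isCompl hN hu hW hpos fun i => (w i).im
  obtain ⟨a, ha⟩ := Submodule.mem_span_singleton.1 <|
    mem_span_singleton_of_dotProduct_mulVec_eq_zero hN hu hW hpos (x := fun i => (w i).re)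
      (by linarith)
  obtain ⟨b, hb⟩ := Submodule.mem_span_singleton.1 <|
    mem_span_singleton_of_dotProduct_mulVec_eq_zero hN hu hW hpos (x := fun i => (w i).im)
      (by linarith)
  refine ⟨⟨a, b⟩, funext fun i => Complex.ext ?_ ?_⟩
  · simp [← congrFun ha i]
  · simp [← congrFun hb i]

end Degenerate

theorem im_mulVec_ofReal (M : Matrix n n ℂ) (x : n → ℝ) :
    (fun i => ((M *ᵥ fun k => (x k : ℂ)) i).im) = M.map Complex.im *ᵥ x := by
  ext i
  simp [mulVec, dotProduct]

theorem star_map_ofReal_mulVec_s8 (X : Matrix n n ℝ) (v : n → ℂ) :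
    star (X.map (↑) *ᵥ v) = X.map (↑) *ᵥ star v := by
  ext i
  simp [mulVec, dotProduct]

theorem map_ofReal_mulVec_ofReal (X : Matrix n n ℝ) (v : n → ℝ) :
    X.map (↑) *ᵥ (fun i => (v i : ℂ)) = fun i => ((X *ᵥ v) i : ℂ) := by
  ext i
  simp [mulVec, dotProduct]

theorem hamiltonian_wronskian_deriv_eq_zero {R : Type*} [CommRing R] {A C : Matrix n n R}
    (hA : Aᵀ = A) (hC : Cᵀ = C) (B : Matrix n n R) (p q r t : n → R) :
    (Bᵀ *ᵥ p + C *ᵥ q) ⬝ᵥ t + p ⬝ᵥ (-A *ᵥ r - B *ᵥ t)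
      - ((-A *ᵥ p - B *ᵥ q) ⬝ᵥ r + q ⬝ᵥ (Bᵀ *ᵥ r + C *ᵥ t)) = 0 := by
  have hB₁ : (Bᵀ *ᵥ p) ⬝ᵥ t = p ⬝ᵥ (B *ᵥ t) := by
    rw [dotProduct_comm, dotProduct_transpose_mulVec]
  have hB₂ : q ⬝ᵥ (Bᵀ *ᵥ r) = (B *ᵥ q) ⬝ᵥ r := by
    rw [dotProduct_transpose_mulVec, dotProduct_comm]
  simp only [add_dotProduct, dotProduct_add, sub_dotProduct, dotProduct_sub, neg_mulVec,
    neg_dotProduct, dotProduct_neg, hB₁, hB₂, mulVec_dotProduct_of_transpose_eq hA,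
    mulVec_dotProduct_of_transpose_eq hC]
  ring

def IsHamiltonianSolution (A B C : ℝ → Matrix n n 𝕜) (p q : ℝ → n → 𝕜) : Prop :=
  ∀ s, HasDerivAt p ((B s)ᵀ *ᵥ p s + C s *ᵥ q s) s ∧
    HasDerivAt q (-A s *ᵥ p s - B s *ᵥ q s) s

noncomputable def hamiltonianField (A B C : Matrix n n 𝕜) :
    (n → 𝕜) × (n → 𝕜) →L[ℝ] (n → 𝕜) × (n → 𝕜) :=
  LinearMap.toContinuousLinearMap <| LinearMap.restrictScalars ℝ <|
    ((mulVecLin Bᵀ).coprod (mulVecLin C)).prod ((-mulVecLin A).coprod (-mulVecLin B))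

theorem hamiltonianField_apply (A B C : Matrix n n 𝕜) (z : (n → 𝕜) × (n → 𝕜)) :
    hamiltonianField A B C z = (Bᵀ *ᵥ z.1 + C *ᵥ z.2, -A *ᵥ z.1 - B *ᵥ z.2) := by
  simp [hamiltonianField, neg_mulVec, sub_eq_add_neg, mulVec_transpose]

theorem continuous_hamiltonianField {A B C : ℝ → Matrix n n 𝕜} (hA : Continuous A)
    (hB : Continuous B) (hC : Continuous C) :
    Continuous fun s => hamiltonianField (A s) (B s) (C s) := by
  refine continuous_clm_apply.2 fun z => ?_
  simp only [hamiltonianField_apply]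
  fun_prop

theorem isHamiltonianSolution_mulVec {A B C J V : ℝ → Matrix n n 𝕜}
    (hJ : ∀ s i k, HasDerivAt (fun t => J t i k) (((B s)ᵀ * J s + C s * V s) i k) s)
    (hV : ∀ s i k, HasDerivAt (fun t => V t i k) ((-A s * J s - B s * V s) i k) s)
    (w : n → 𝕜) :
    IsHamiltonianSolution A B C (fun t => J t *ᵥ w) (fun t => V t *ᵥ w) := fun s => by
  constructor
  · simpa only [add_mulVec, mulVec_mulVec] using hasDerivAt_mulVec_const (hJ s) w
  · simpa only [sub_mulVec, mulVec_mulVec] using hasDerivAt_mulVec_const (hV s) w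

namespace IsHamiltonianSolution

section

variable {A B C : ℝ → Matrix n n 𝕜} {p q r t : ℝ → n → 𝕜}

theorem wronskian_eq (hA : ∀ s, (A s)ᵀ = A s) (hC : ∀ s, (C s)ᵀ = C s)
    (h₁ : IsHamiltonianSolution A B C p q) (h₂ : IsHamiltonianSolution A B C r t) (s s' : ℝ) :
    p s ⬝ᵥ t s - q s ⬝ᵥ r s = p s' ⬝ᵥ t s' - q s' ⬝ᵥ r s' := by
  have hderiv : ∀ u, HasDerivAt (fun u => p u ⬝ᵥ t u - q u ⬝ᵥ r u) 0 u := fun u => by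
    simpa only [hamiltonian_wronskian_deriv_eq_zero (hA u) (hC u)] using
      ((h₁ u).1.dotProduct (h₂ u).2).fun_sub ((h₁ u).2.dotProduct (h₂ u).1)
  exact is_const_of_deriv_eq_zero (fun u => (hderiv u).differentiableAt)
    (fun u => (hderiv u).deriv) s s'

theorem eq_of_eq (hA : Continuous A) (hB : Continuous B) (hC : Continuous C)
    (h₁ : IsHamiltonianSolution A B C p q) (h₂ : IsHamiltonianSolution A B C r t) {t₀ : ℝ}
    (hp : p t₀ = r t₀) (hq : q t₀ = t t₀) : p = r ∧ q = t := by
  have hsol : ∀ {p q : ℝ → n → 𝕜}, IsHamiltonianSolution A B C p q → ∀ s,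
      HasDerivAt (fun s => (p s, q s)) (hamiltonianField (A s) (B s) (C s) (p s, q s)) s :=
    fun h s => by
      rw [hamiltonianField_apply]
      exact (h s).1.prodMk (h s).2
  have := ODE_linear_solution_unique (continuous_hamiltonianField hA hB hC) (hsol h₁) (hsol h₂)
    (Prod.ext hp hq)
  exact ⟨funext fun s => congrArg Prod.fst (congrFun this s),
    funext fun s => congrArg Prod.snd (congrFun this s)⟩

end

variable {A B C : ℝ → Matrix n n ℝ} {p q : ℝ → n → ℂ}

theorem conj
    (h : IsHamiltonianSolution (fun s => (A s).map (↑)) (fun s => (B s).map (↑))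
      (fun s => (C s).map (↑)) p q) :
    IsHamiltonianSolution (fun s => (A s).map (↑)) (fun s => (B s).map (↑))
      (fun s => (C s).map (↑)) (fun s => star (p s)) (fun s => star (q s)) := fun s => by
  constructor
  · simpa only [star_add, ← transpose_map, star_map_ofReal_mulVec_s8] using (h s).1.star
  · simpa only [star_sub, neg_mulVec, star_neg, star_map_ofReal_mulVec_s8] using (h s).2.star

theorem im_star_dotProduct_eq (hA : ∀ s, (A s)ᵀ = A s) (hC : ∀ s, (C s)ᵀ = C s)
    (h : IsHamiltonianSolution (fun s => (A s).map (↑)) (fun s => (B s).map (↑))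
      (fun s => (C s).map (↑)) p q) (s s' : ℝ) :
    (star (p s) ⬝ᵥ q s).im = (star (p s') ⬝ᵥ q s').im := by
  have := congrArg Complex.im <| h.conj.wronskian_eq (fun s => by rw [← transpose_map, hA])
    (fun s => by rw [← transpose_map, hC]) h s s'
  rw [star_dotProduct (q s), star_dotProduct (q s')] at this
  simp only [Complex.sub_im, Complex.star_def, Complex.conj_im] at this
  linarith

theorem ofReal {j v : ℝ → n → ℝ} (h : IsHamiltonianSolution A B C j v) :
    IsHamiltonianSolution (fun s => (A s).map (↑)) (fun s => (B s).map (↑))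
      (fun s => (C s).map (↑)) (fun s i => (j s i : ℂ)) (fun s i => (v s i : ℂ)) := fun s => by
  constructor
  · refine hasDerivAt_pi.2 fun i => ?_
    simpa [← transpose_map, map_ofReal_mulVec_ofReal] using
      (hasDerivAt_pi.1 (h s).1 i).ofReal_comp
  · refine hasDerivAt_pi.2 fun i => ?_
    simpa [neg_mulVec, map_ofReal_mulVec_ofReal] using
      (hasDerivAt_pi.1 (h s).2 i).ofReal_comp

end IsHamiltonianSolution

end

theorem gaussian_beam_J_invertible_general
    (A B C : ℝ → Matrix (Fin 4) (Fin 4) ℝ)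
    (hAcont : ∀ i j : Fin 4, Continuous fun s => A s i j)
    (hBcont : ∀ i j : Fin 4, Continuous fun s => B s i j)
    (hCcont : ∀ i j : Fin 4, Continuous fun s => C s i j)
    (hAsymm : ∀ s : ℝ, (A s)ᵀ = A s)
    (hCsymm : ∀ s : ℝ, (C s)ᵀ = C s)
    (J V : ℝ → Matrix (Fin 4) (Fin 4) ℂ)
    (hJ : ∀ (s : ℝ) (i j : Fin 4), HasDerivAt (fun t => J t i j)
      (((matC (B s))ᵀ * J s + matC (C s) * V s) i j) s)
    (hV : ∀ (s : ℝ) (i j : Fin 4), HasDerivAt (fun t => V t i j)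
      ((-(matC (A s)) * J s - matC (B s) * V s) i j) s)
    (M₀ : Matrix (Fin 4) (Fin 4) ℂ) (hM₀ : M₀ᵀ = M₀)
    (hJ0 : J 0 = 1) (hV0 : V 0 = M₀)
    (j v : ℝ → Fin 4 → ℝ)
    (hj : ∀ (s : ℝ) (i : Fin 4), HasDerivAt (fun t => j t i)
      (((B s)ᵀ *ᵥ j s + C s *ᵥ v s) i) s)
    (hv : ∀ (s : ℝ) (i : Fin 4), HasDerivAt (fun t => v t i)
      ((-(A s) *ᵥ j s - B s *ᵥ v s) i) s)
    (hjne : ∀ s : ℝ, j s ≠ 0)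
    (hv0 : (fun i => ((v 0 i : ℝ) : ℂ)) = M₀ *ᵥ (fun i => ((j 0 i : ℝ) : ℂ)))
    (W : Submodule ℝ (Fin 4 → ℝ))
    (hWcompl : IsCompl W (Submodule.span ℝ {j 0}))
    (hWpos : ∀ x ∈ W, x ≠ 0 →
      0 < ∑ μ : Fin 4, ∑ ν : Fin 4, x μ * (M₀ μ ν).im * x ν) :
    ∀ s : ℝ, IsUnit (J s) := by
  intro s₀
  rw [isUnit_iff_isUnit_det, isUnit_iff_ne_zero]
  intro hdet
  obtain ⟨w, hw, hJw⟩ := exists_mulVec_eq_zero_iff.2 hdet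
  have him : (star w ⬝ᵥ M₀ *ᵥ w).im = 0 := by
    simpa [hJw, hJ0, hV0] using
      (isHamiltonianSolution_mulVec hJ hV w).im_star_dotProduct_eq hAsymm hCsymm 0 s₀
  have hu : M₀.map Complex.im *ᵥ j 0 = 0 := by
    rw [← im_mulVec_ofReal, ← hv0]
    ext
    simp
  have hpos : ∀ x ∈ W, x ≠ 0 → 0 < x ⬝ᵥ M₀.map Complex.im *ᵥ x := fun x hx hx₀ => by
    simpa [dotProduct, mulVec, Finset.mul_sum, mul_assoc] using hWpos x hx hx₀
  obtain ⟨c, rfl⟩ := exists_eq_smul_of_im_star_dotProduct_mulVec_eq_zero hM₀ hu hWcompl hpos him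
  have hJj : J s₀ *ᵥ (fun i => (j 0 i : ℂ)) = 0 := by
    rw [mulVec_smul, smul_eq_zero] at hJw
    exact hJw.resolve_left (by rintro rfl; simp at hw)
  have hcont : ∀ {X : ℝ → Matrix (Fin 4) (Fin 4) ℝ}, (∀ i k, Continuous fun s => X s i k) →
      Continuous fun s => matC (X s) :=
    fun hX => (continuous_matrix hX).matrix_map Complex.continuous_ofReal
  have hjv := IsHamiltonianSolution.ofReal (A := A) (B := B) (C := C)
    fun s => ⟨hasDerivAt_pi.2 (hj s), hasDerivAt_pi.2 (hv s)⟩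
  have huniq := (isHamiltonianSolution_mulVec hJ hV fun i => (j 0 i : ℂ)).eq_of_eq
    (hcont hAcont) (hcont hBcont) (hcont hCcont) hjv (t₀ := 0)
    (by rw [hJ0, one_mulVec]) (by rw [hV0, hv0])
  apply hjne s₀
  ext i
  simpa [hJj] using (congrFun (congrFun huniq.1 s₀) i).symm

/-- The key lemma of the Gaussian beam construction (Section 2.2 of the paper):
under the stated positivity and compatibility conditions on the data `M₀` and the
distinguished real solution `(j, v)` (with `j(s) ≠ 0`), the matrix `J(s)` of the
solution of the linearised system with `J(0) = Id`, `V(0) = M₀` is invertible for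
every `s ∈ ℝ` (no breakdown at caustics). -/
theorem gaussian_beam_J_invertible
    (A B C : ℝ → Matrix (Fin 4) (Fin 4) ℝ)
    (hAcont : ∀ i j : Fin 4, Continuous fun s => A s i j)
    (hBcont : ∀ i j : Fin 4, Continuous fun s => B s i j)
    (hCcont : ∀ i j : Fin 4, Continuous fun s => C s i j)
    (hAsymm : ∀ s : ℝ, (A s)ᵀ = A s)
    (hCsymm : ∀ s : ℝ, (C s)ᵀ = C s)
    (J V : ℝ → Matrix (Fin 4) (Fin 4) ℂ)
    (hJ : ∀ (s : ℝ) (i j : Fin 4), HasDerivAt (fun t => J t i j)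
      (((matC (B s))ᵀ * J s + matC (C s) * V s) i j) s)
    (hV : ∀ (s : ℝ) (i j : Fin 4), HasDerivAt (fun t => V t i j)
      ((-(matC (A s)) * J s - matC (B s) * V s) i j) s)
    (M₀ : Matrix (Fin 4) (Fin 4) ℂ) (hM₀ : M₀ᵀ = M₀)
    (hJ0 : J 0 = 1) (hV0 : V 0 = M₀)
    (j v : ℝ → Fin 4 → ℝ)
    (hj : ∀ (s : ℝ) (i : Fin 4), HasDerivAt (fun t => j t i)
      (((B s)ᵀ *ᵥ j s + C s *ᵥ v s) i) s)
    (hv : ∀ (s : ℝ) (i : Fin 4), HasDerivAt (fun t => v t i)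
      ((-(A s) *ᵥ j s - B s *ᵥ v s) i) s)
    (hjne : ∀ s : ℝ, j s ≠ 0)
    (hv0 : (fun i => ((v 0 i : ℝ) : ℂ)) = M₀ *ᵥ (fun i => ((j 0 i : ℝ) : ℂ)))
    (W : Submodule ℝ (Fin 4 → ℝ))
    (hWdim : Module.finrank ℝ W = 3)
    (hWcompl : IsCompl W (Submodule.span ℝ {j 0}))
    (hWpos : ∀ x ∈ W, x ≠ 0 →
      0 < ∑ μ : Fin 4, ∑ ν : Fin 4, x μ * (M₀ μ ν).im * x ν) :
    ∀ s : ℝ, IsUnit (J s) :=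
  gaussian_beam_J_invertible_general A B C hAcont hBcont hCcont hAsymm hCsymm J V hJ hV M₀ hM₀ hJ0
    hV0 j v hj hv hjne hv0 W hWcompl hWpos
end

section
/- Let m > 0 and consider the Schwarzschild metric g(t,r,θ,φ) := diag(−(1−2m/r), (1−2m/r)⁻¹, r², r² sin²θ) on U := {r > 2m, 0 < θ < π}, and the photon-sphere null geodesic γ(s) := (s, 3m, π/2, (27m²)^{−1/2}·s). Then: (i) the coordinate vector field ∂_θ = (0,0,1,0) is parallel along γ, i.e. D_s ∂_θ = 0; (ii) R(∂_θ, γ̇(s)) γ̇(s) = (27m²)^{−1} · ∂_θ for all s; (iii) consequently the vector field J(s) := (0, 0, (27m²)^{1/2} · sin((27m²)^{−1/2} s), 0) along γ satisfies the Jacobi equation D_s² J + R(J, γ̇) γ̇ = 0, is not identically zero, and vanishes at s = 0 and at s = π·(27m²)^{1/2}; hence γ(0) and γ(π·(27m²)^{1/2}) are conjugate points along γ. -/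
open Matrix

/-- The Christoffel symbols `Γ^μ_{αβ}` of a metric `g` on (an open subset of) `ℝ⁴`. -/
noncomputable def Christoffel (g : (Fin 4 → ℝ) → Matrix (Fin 4) (Fin 4) ℝ)
    (μ α β : Fin 4) (x : Fin 4 → ℝ) : ℝ :=
  (1 / 2) * ∑ ν : Fin 4, (g x)⁻¹ μ ν *
    (fderiv ℝ (fun y => g y ν β) x (Pi.single α 1)
      + fderiv ℝ (fun y => g y ν α) x (Pi.single β 1)
      - fderiv ℝ (fun y => g y α β) x (Pi.single ν 1))

/-- The covariant derivative `(D_s X)^μ` of a vector field `X` along a curve `γ`. -/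
noncomputable def covDeriv (g : (Fin 4 → ℝ) → Matrix (Fin 4) (Fin 4) ℝ)
    (γ : ℝ → Fin 4 → ℝ) (X : ℝ → Fin 4 → ℝ) (s : ℝ) (μ : Fin 4) : ℝ :=
  deriv (fun t => X t μ) s
    + ∑ α : Fin 4, ∑ β : Fin 4,
        Christoffel g μ α β (γ s) * deriv (fun t => γ t α) s * X s β

/-- The curvature `[R(X,Y)Z]^μ` of `g` at the point `x`. -/
noncomputable def riemann (g : (Fin 4 → ℝ) → Matrix (Fin 4) (Fin 4) ℝ)
    (X Y Z : Fin 4 → ℝ) (x : Fin 4 → ℝ) (μ : Fin 4) : ℝ :=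
  ∑ α : Fin 4, ∑ β : Fin 4, ∑ ν : Fin 4,
    (fderiv ℝ (Christoffel g μ β ν) x (Pi.single α 1)
      - fderiv ℝ (Christoffel g μ α ν) x (Pi.single β 1)
      + ∑ l : Fin 4, (Christoffel g μ α l x * Christoffel g l β ν x
          - Christoffel g μ β l x * Christoffel g l α ν x))
    * X α * Y β * Z ν

/-- The Schwarzschild metric in `(t, r, θ, φ)` coordinates. -/
noncomputable def schwarzschild (m : ℝ) (x : Fin 4 → ℝ) : Matrix (Fin 4) (Fin 4) ℝ :=
  Matrix.diagonal
    ![-(1 - 2 * m / x 1), (1 - 2 * m / x 1)⁻¹, (x 1) ^ 2, (x 1) ^ 2 * Real.sin (x 2) ^ 2]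

/-- The trapped photon sphere null geodesic of Schwarzschild. -/
noncomputable def gammaPhoton (m : ℝ) (s : ℝ) : Fin 4 → ℝ :=
  ![s, 3 * m, Real.pi / 2, (Real.sqrt (27 * m ^ 2))⁻¹ * s]

/-- Its velocity vector. -/
noncomputable def gammaPhoton' (m : ℝ) (s : ℝ) : Fin 4 → ℝ :=
  fun α => deriv (fun t => gammaPhoton m t α) s

/-- The Jacobi field `J(s) = (27m²)^{1/2} sin((27m²)^{-1/2} s) ∂_θ` along the photon
sphere geodesic. -/
noncomputable def jacobiPhoton (m : ℝ) (s : ℝ) : Fin 4 → ℝ :=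
  ![0, 0, Real.sqrt (27 * m ^ 2) * Real.sin ((Real.sqrt (27 * m ^ 2))⁻¹ * s), 0]

/-!
Along the photon sphere `r = 3m, θ = π/2` the symbols `Γ^μ_{tθ}` and `Γ^μ_{φθ}` vanish, so
`∂_θ` is parallel and `D_s (a ∂_θ) = a' ∂_θ`. The metric depends only on `(r, θ)`, so in
`R(∂_θ, γ̇)γ̇` the only derivatives of Christoffel symbols that enter are the `θ`-derivatives of
`Γ^μ_{tt}`, `Γ^μ_{tφ}`, `Γ^μ_{φφ}`; near the equator these are explicit functions of `(r, θ)`,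
and the only non-zero one is `∂_θ Γ^θ_{φφ} = -cos 2θ = 1`. Together with the quadratic terms this
gives `R(∂_θ, γ̇)γ̇ = (27m²)⁻¹ ∂_θ`, so `a ∂_θ` is a Jacobi field iff `a'' + a / (27m²) = 0`,
which `a(s) = √(27m²) sin(s / √(27m²))` solves; it vanishes at `0` and `π √(27m²)`.
-/

open Filter Topology Real

theorem fderiv_apply_eq_zero_of_forall_add_smul {E F : Type*} [NormedAddCommGroup E]
    [NormedSpace ℝ E] [NormedAddCommGroup F] [NormedSpace ℝ F] {f : E → F} {x v : E}
    (h : ∀ t : ℝ, f (x + t • v) = f x) : fderiv ℝ f x v = 0 := by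
  by_cases hf : DifferentiableAt ℝ f x
  · rw [← hf.lineDeriv_eq_fderiv, lineDeriv]
    simp [h]
  · simp [fderiv_zero_of_not_differentiableAt hf]

theorem fderiv_apply_of_eventuallyEq_mul_comp {ι : Type*} [Fintype ι] {f : (ι → ℝ) → ℝ}
    {A B : ℝ → ℝ} {x : ι → ℝ} {j k : ι} (hf : f =ᶠ[𝓝 x] fun y => A (y j) * B (y k))
    (hA : DifferentiableAt ℝ A (x j)) (hB : DifferentiableAt ℝ B (x k)) (v : ι → ℝ) :
    fderiv ℝ f x v = deriv A (x j) * B (x k) * v j + A (x j) * deriv B (x k) * v k := by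
  have hproj (i : ι) : HasFDerivAt (fun y : ι → ℝ => y i)
      (ContinuousLinearMap.proj i : (ι → ℝ) →L[ℝ] ℝ) x :=
    (ContinuousLinearMap.proj i : (ι → ℝ) →L[ℝ] ℝ).hasFDerivAt
  have hAB : HasFDerivAt (fun y : ι → ℝ => A (y j) * B (y k)) _ x :=
    (hA.hasDerivAt.comp_hasFDerivAt x (hproj j)).mul
      (hB.hasDerivAt.comp_hasFDerivAt x (hproj k))
  rw [hf.fderiv_eq, hAB.fderiv]
  simp only [_root_.add_apply, _root_.smul_apply, ContinuousLinearMap.proj_apply,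
    Function.comp_apply, smul_eq_mul]
  ring

theorem hasDerivAt_one_sub_div {c r : ℝ} (hr : r ≠ 0) :
    HasDerivAt (fun t => 1 - c / t) (c / r ^ 2) r := by
  have h := ((hasDerivAt_inv hr).const_mul c).const_sub 1
  simp only [← div_eq_mul_inv] at h
  exact h.congr_deriv (by ring)

theorem deriv_deriv_const_mul_sin_const_mul (c k s : ℝ) :
    deriv (deriv fun t => c * sin (k * t)) s = -k ^ 2 * (c * sin (k * s)) := by
  have hlin (t : ℝ) : HasDerivAt (fun t => k * t) k t := by
    simpa using (hasDerivAt_id t).const_mul k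
  have h1 : deriv (fun t => c * sin (k * t)) = fun t => c * k * cos (k * t) := by
    funext t
    rw [(((hlin t).sin).const_mul c).deriv]
    ring
  rw [h1, (((hlin s).cos).const_mul (c * k)).deriv]
  ring

section Christoffel

variable {g : (Fin 4 → ℝ) → Matrix (Fin 4) (Fin 4) ℝ} {v : Fin 4 → ℝ}

theorem christoffel_add_smul (hg : ∀ y (t : ℝ), g (y + t • v) = g y) (μ α β : Fin 4)
    (x : Fin 4 → ℝ) (t : ℝ) : Christoffel g μ α β (x + t • v) = Christoffel g μ α β x := by
  have hd (ν κ : Fin 4) :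
      fderiv ℝ (fun y => g y ν κ) (x + t • v) = fderiv ℝ (fun y => g y ν κ) x := by
    rw [← fderiv_comp_add_right]
    simp only [hg]
  simp only [Christoffel, hd, hg]

theorem fderiv_christoffel_apply_eq_zero (hg : ∀ y (t : ℝ), g (y + t • v) = g y)
    (μ α β : Fin 4) (x : Fin 4 → ℝ) : fderiv ℝ (Christoffel g μ α β) x v = 0 :=
  fderiv_apply_eq_zero_of_forall_add_smul (christoffel_add_smul hg μ α β x)

theorem christoffel_diagonal {d : (Fin 4 → ℝ) → Fin 4 → ℝ} {x : Fin 4 → ℝ}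
    (hd : ∀ ν, d x ν ≠ 0) (μ α β : Fin 4) :
    Christoffel (fun y => diagonal (d y)) μ α β x = (d x μ)⁻¹ / 2 *
      ((if μ = β then fderiv ℝ (fun y => d y μ) x (Pi.single α 1) else 0)
        + (if μ = α then fderiv ℝ (fun y => d y μ) x (Pi.single β 1) else 0)
        - (if α = β then fderiv ℝ (fun y => d y α) x (Pi.single μ 1) else 0)) := by
  have hentry (ν κ : Fin 4) : (fun y => diagonal (d y) ν κ) =
      if ν = κ then fun y => d y ν else fun _ => 0 := by
    split_ifs with h
    · subst h; simp
    · simp [h]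
  have hinv : (diagonal (d x))⁻¹ = diagonal (d x)⁻¹ := by
    refine inv_eq_right_inv ?_
    rw [diagonal_mul_diagonal, ← diagonal_one]
    exact congrArg diagonal (funext fun ν => mul_inv_cancel₀ (hd ν))
  simp only [Christoffel, hinv, hentry]
  rw [Finset.sum_eq_single μ (fun ν _ hν => by simp [Ne.symm hν]) (by simp)]
  split_ifs <;> simp <;> ring

end Christoffel

section Schwarzschild

def schwarzschildExterior (m : ℝ) : Set (Fin 4 → ℝ) := {x | 2 * m < x 1 ∧ 0 < x 2 ∧ x 2 < π}

theorem isOpen_schwarzschildExterior (m : ℝ) : IsOpen (schwarzschildExterior m) :=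
  (isOpen_lt continuous_const (continuous_apply 1)).inter
    ((isOpen_lt continuous_const (continuous_apply 2)).inter
      (isOpen_lt (continuous_apply 2) continuous_const))

noncomputable def schwarzschildDiag (m : ℝ) (x : Fin 4 → ℝ) : Fin 4 → ℝ :=
  ![-(1 - 2 * m / x 1), (1 - 2 * m / x 1)⁻¹, x 1 ^ 2, x 1 ^ 2 * sin (x 2) ^ 2]

theorem schwarzschild_eq_diagonal (m : ℝ) :
    schwarzschild m = fun x => diagonal (schwarzschildDiag m x) := rfl

variable {m : ℝ} {x : Fin 4 → ℝ}

theorem one_sub_div_pos_of_mem_schwarzschildExterior (hm : 0 < m)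
    (hx : x ∈ schwarzschildExterior m) : 0 < 1 - 2 * m / x 1 := by
  have : 2 * m / x 1 < 1 := (div_lt_one (by linarith [hx.1])).2 hx.1
  linarith

theorem schwarzschildDiag_ne_zero (hm : 0 < m) (hx : x ∈ schwarzschildExterior m)
    (ν : Fin 4) : schwarzschildDiag m x ν ≠ 0 := by
  have hf := one_sub_div_pos_of_mem_schwarzschildExterior hm hx
  have hr : x 1 ≠ 0 := by linarith [hx.1]
  have hs : sin (x 2) ≠ 0 := (sin_pos_of_pos_of_lt_pi hx.2.1 hx.2.2).ne'
  fin_cases ν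
  · exact neg_ne_zero.2 hf.ne'
  · exact inv_ne_zero hf.ne'
  · exact pow_ne_zero 2 hr
  · exact mul_ne_zero (pow_ne_zero 2 hr) (pow_ne_zero 2 hs)

theorem fderiv_schwarzschildDiag (hm : 0 < m) (hx : x ∈ schwarzschildExterior m)
    (ν : Fin 4) (v : Fin 4 → ℝ) :
    fderiv ℝ (fun y => schwarzschildDiag m y ν) x v =
      ![-(2 * m / x 1 ^ 2), -(2 * m / x 1 ^ 2) / (1 - 2 * m / x 1) ^ 2, 2 * x 1,
          2 * x 1 * sin (x 2) ^ 2] ν * v 1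
        + ![0, 0, 0, x 1 ^ 2 * (2 * sin (x 2) * cos (x 2))] ν * v 2 := by
  have hf := (one_sub_div_pos_of_mem_schwarzschildExterior hm hx).ne'
  have hr : x 1 ≠ 0 := by linarith [hx.1]
  have hsq (r : ℝ) : HasDerivAt (fun t : ℝ => t ^ 2) (2 * r) r := by
    simpa using hasDerivAt_pow 2 r
  have hsin2 : HasDerivAt (fun t => sin t ^ 2) (2 * sin (x 2) * cos (x 2)) (x 2) := by
    simpa using (hasDerivAt_sin (x 2)).fun_pow 2
  have hconst := hasDerivAt_const (x 2) (1 : ℝ)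
  have hsep {A B : ℝ → ℝ} {A' B' : ℝ} (hA : HasDerivAt A A' (x 1))
      (hB : HasDerivAt B B' (x 2)) (h : ∀ y, schwarzschildDiag m y ν = A (y 1) * B (y 2)) :
      fderiv ℝ (fun y => schwarzschildDiag m y ν) x v =
        A' * B (x 2) * v 1 + A (x 1) * B' * v 2 := by
    rw [fderiv_apply_of_eventuallyEq_mul_comp (.of_eq (funext h)) hA.differentiableAt
      hB.differentiableAt, hA.deriv, hB.deriv]
  fin_cases ν
  · rw [hsep (hasDerivAt_one_sub_div hr).neg hconst fun y => (mul_one _).symm]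
    simp
  · rw [hsep ((hasDerivAt_one_sub_div hr).inv hf) hconst fun y => (mul_one _).symm]
    simp
  · rw [hsep (hsq _) hconst fun y => (mul_one _).symm]
    simp
  · rw [hsep (hsq _) hsin2 fun y => rfl]
    simp

theorem christoffel_schwarzschild_time_time (hm : 0 < m) (hx : x ∈ schwarzschildExterior m)
    (μ : Fin 4) : Christoffel (schwarzschild m) μ 0 0 x =
      if μ = 1 then m * (1 - 2 * m / x 1) / x 1 ^ 2 else 0 := by
  have hf := (one_sub_div_pos_of_mem_schwarzschildExterior hm hx).ne'
  have hr : x 1 ≠ 0 := by linarith [hx.1]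
  rw [schwarzschild_eq_diagonal, christoffel_diagonal (schwarzschildDiag_ne_zero hm hx)]
  simp only [fderiv_schwarzschildDiag hm hx]
  fin_cases μ <;> simp [schwarzschildDiag]
  field_simp

theorem christoffel_schwarzschild_time_azimuth (hm : 0 < m)
    (hx : x ∈ schwarzschildExterior m) (μ : Fin 4) :
    Christoffel (schwarzschild m) μ 0 3 x = 0 ∧ Christoffel (schwarzschild m) μ 3 0 x = 0 := by
  rw [schwarzschild_eq_diagonal, christoffel_diagonal (schwarzschildDiag_ne_zero hm hx),
    christoffel_diagonal (schwarzschildDiag_ne_zero hm hx)]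
  simp only [fderiv_schwarzschildDiag hm hx]
  fin_cases μ <;> simp

theorem christoffel_schwarzschild_azimuth_azimuth (hm : 0 < m)
    (hx : x ∈ schwarzschildExterior m) (μ : Fin 4) :
    Christoffel (schwarzschild m) μ 3 3 x =
      if μ = 1 then -((1 - 2 * m / x 1) * x 1 * sin (x 2) ^ 2)
      else if μ = 2 then -(sin (x 2) * cos (x 2)) else 0 := by
  have hf := (one_sub_div_pos_of_mem_schwarzschildExterior hm hx).ne'
  have hr : x 1 ≠ 0 := by linarith [hx.1]
  rw [schwarzschild_eq_diagonal, christoffel_diagonal (schwarzschildDiag_ne_zero hm hx)]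
  simp only [fderiv_schwarzschildDiag hm hx]
  fin_cases μ <;> simp [schwarzschildDiag] <;> field_simp

theorem schwarzschild_add_smul_single {i : Fin 4} (hi1 : i ≠ 1) (hi2 : i ≠ 2)
    (y : Fin 4 → ℝ) (t : ℝ) : schwarzschild m (y + t • Pi.single i 1) = schwarzschild m y := by
  simp [schwarzschild, hi1.symm, hi2.symm]

theorem fderiv_christoffel_schwarzschild_single {i : Fin 4} (hi1 : i ≠ 1) (hi2 : i ≠ 2)
    (μ α β : Fin 4) (x : Fin 4 → ℝ) :
    fderiv ℝ (Christoffel (schwarzschild m) μ α β) x (Pi.single i 1) = 0 :=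
  fderiv_christoffel_apply_eq_zero (schwarzschild_add_smul_single hi1 hi2) μ α β x

end Schwarzschild

section PhotonSphere

variable {m : ℝ}

theorem gammaPhoton_mem_schwarzschildExterior (hm : 0 < m) (s : ℝ) :
    gammaPhoton m s ∈ schwarzschildExterior m :=
  ⟨show 2 * m < 3 * m by linarith, show 0 < π / 2 by positivity,
    show π / 2 < π by linarith [pi_pos]⟩

theorem deriv_gammaPhoton (s : ℝ) (α : Fin 4) :
    deriv (fun t => gammaPhoton m t α) s = ![1, 0, 0, (√(27 * m ^ 2))⁻¹] α := by
  fin_cases α <;> simp [gammaPhoton]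

theorem gammaPhoton'_eq (s : ℝ) : gammaPhoton' m s = ![1, 0, 0, (√(27 * m ^ 2))⁻¹] :=
  funext (deriv_gammaPhoton s)

/-- The values of `Γ^μ_{αβ}` at `r = 3m`, `θ = π/2`, where `1 - 2m/r = 1/3`. -/
noncomputable def photonSphereChristoffel (m : ℝ) : Fin 4 → Fin 4 → Fin 4 → ℝ :=
  ![![![0, 1 / (3 * m), 0, 0], ![1 / (3 * m), 0, 0, 0], 0, 0],
    ![![1 / (27 * m), 0, 0, 0], ![0, -(1 / (3 * m)), 0, 0], ![0, 0, -m, 0], ![0, 0, 0, -m]],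
    ![0, ![0, 0, 1 / (3 * m), 0], ![0, 1 / (3 * m), 0, 0], 0],
    ![0, ![0, 0, 0, 1 / (3 * m)], 0, ![0, 1 / (3 * m), 0, 0]]]

theorem christoffel_schwarzschild_gammaPhoton (hm : 0 < m) (s : ℝ) (μ α β : Fin 4) :
    Christoffel (schwarzschild m) μ α β (gammaPhoton m s) = photonSphereChristoffel m μ α β := by
  have hx := gammaPhoton_mem_schwarzschildExterior hm s
  rw [schwarzschild_eq_diagonal, christoffel_diagonal (schwarzschildDiag_ne_zero hm hx)]
  simp only [fderiv_schwarzschildDiag hm hx]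
  have hm' := hm.ne'
  fin_cases μ <;> fin_cases α <;> fin_cases β <;>
    simp [photonSphereChristoffel, schwarzschildDiag, gammaPhoton] <;> field_simp <;> ring

theorem fderiv_christoffel_schwarzschild_gammaPhoton_theta (hm : 0 < m) (s : ℝ)
    (μ β ν : Fin 4) (hβ : β = 0 ∨ β = 3) (hν : ν = 0 ∨ ν = 3) :
    fderiv ℝ (Christoffel (schwarzschild m) μ β ν) (gammaPhoton m s) (Pi.single 2 1) =
      if μ = 2 ∧ β = 3 ∧ ν = 3 then 1 else 0 := by
  have hU : ∀ᶠ y in 𝓝 (gammaPhoton m s), y ∈ schwarzschildExterior m :=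
    (isOpen_schwarzschildExterior m).mem_nhds (gammaPhoton_mem_schwarzschildExterior hm s)
  have hzero {f : (Fin 4 → ℝ) → ℝ} (hf : ∀ y ∈ schwarzschildExterior m, f y = 0) :
      fderiv ℝ f (gammaPhoton m s) = 0 := by
    rw [Filter.EventuallyEq.fderiv_eq (hU.mono hf : f =ᶠ[𝓝 _] fun _ => 0),
      fderiv_fun_const, Pi.zero_apply]
  have hsep {f : (Fin 4 → ℝ) → ℝ} {A B : ℝ → ℝ} {B' : ℝ} (hB : HasDerivAt B B' (π / 2))
      (hA : DifferentiableAt ℝ A (3 * m))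
      (hf : ∀ y ∈ schwarzschildExterior m, f y = A (y 1) * B (y 2)) :
      fderiv ℝ f (gammaPhoton m s) (Pi.single 2 1) = A (3 * m) * B' := by
    rw [fderiv_apply_of_eventuallyEq_mul_comp (hU.mono hf) hA hB.differentiableAt]
    simp [gammaPhoton, hB.deriv]
  rcases hβ with rfl | rfl <;> rcases hν with rfl | rfl
  · rw [Filter.EventuallyEq.fderiv_eq
        (hU.mono fun y hy => christoffel_schwarzschild_time_time hm hy μ),
      fderiv_apply_eq_zero_of_forall_add_smul fun t => by simp]
    simp
  · simp [hzero fun y hy => (christoffel_schwarzschild_time_azimuth hm hy μ).1]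
  · simp [hzero fun y hy => (christoffel_schwarzschild_time_azimuth hm hy μ).2]
  · have h33 := fun y (hy : y ∈ schwarzschildExterior m) =>
      christoffel_schwarzschild_azimuth_azimuth hm hy μ
    fin_cases μ
    · simp [hzero fun y hy => by simpa using h33 y hy]
    · have hA : DifferentiableAt ℝ (fun r => -((1 - 2 * m / r) * r)) (3 * m) := by
        have : 3 * m ≠ 0 := by positivity
        fun_prop (disch := assumption)
      rw [hsep ((hasDerivAt_sin _).fun_pow 2) hA fun y hy => by simpa using h33 y hy]
      simp
    · rw [hsep ((hasDerivAt_sin _).fun_mul (hasDerivAt_cos _)).fun_neg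
        (differentiableAt_const 1) fun y hy => by simpa using h33 y hy]
      simp
    · simp [hzero fun y hy => by simpa using h33 y hy]

theorem covDeriv_schwarzschild_gammaPhoton_theta (hm : 0 < m) (a : ℝ → ℝ) (s : ℝ)
    (μ : Fin 4) :
    covDeriv (schwarzschild m) (gammaPhoton m) (fun t => ![0, 0, a t, 0]) s μ =
      ![0, 0, deriv a s, 0] μ := by
  simp only [covDeriv, Fin.sum_univ_four, christoffel_schwarzschild_gammaPhoton hm,
    deriv_gammaPhoton]
  fin_cases μ <;> simp [photonSphereChristoffel]

theorem riemann_schwarzschild_gammaPhoton_theta (hm : 0 < m) (s a : ℝ) (μ : Fin 4) :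
    riemann (schwarzschild m) ![0, 0, a, 0] (gammaPhoton' m s) (gammaPhoton' m s)
      (gammaPhoton m s) μ = (27 * m ^ 2)⁻¹ * ![0, 0, a, 0] μ := by
  have hω : 27 * m ^ 2 * (√(27 * m ^ 2))⁻¹ ^ 2 = 1 := by
    rw [inv_pow, sq_sqrt (by positivity), mul_inv_cancel₀ (by positivity)]
  rw [gammaPhoton'_eq]
  generalize (√(27 * m ^ 2))⁻¹ = ω at hω ⊢
  simp only [riemann, Fin.sum_univ_four, christoffel_schwarzschild_gammaPhoton hm,
    fderiv_christoffel_schwarzschild_single (m := m) (i := 0) (by decide) (by decide),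
    fderiv_christoffel_schwarzschild_single (m := m) (i := 3) (by decide) (by decide),
    fderiv_christoffel_schwarzschild_gammaPhoton_theta hm s _ 0 0 (by simp) (by simp),
    fderiv_christoffel_schwarzschild_gammaPhoton_theta hm s _ 0 3 (by simp) (by simp),
    fderiv_christoffel_schwarzschild_gammaPhoton_theta hm s _ 3 0 (by simp) (by simp),
    fderiv_christoffel_schwarzschild_gammaPhoton_theta hm s _ 3 3 (by simp) (by simp)]
  fin_cases μ <;> simp [photonSphereChristoffel]
  field_simp
  linear_combination 2 * a * hω

theorem jacobi_schwarzschild_gammaPhoton_theta (hm : 0 < m) (a : ℝ → ℝ) (s : ℝ)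
    (μ : Fin 4) :
    covDeriv (schwarzschild m) (gammaPhoton m)
        (covDeriv (schwarzschild m) (gammaPhoton m) fun t => ![0, 0, a t, 0]) s μ
      + riemann (schwarzschild m) ![0, 0, a s, 0] (gammaPhoton' m s) (gammaPhoton' m s)
          (gammaPhoton m s) μ =
      ![0, 0, deriv (deriv a) s + (27 * m ^ 2)⁻¹ * a s, 0] μ := by
  have hD : covDeriv (schwarzschild m) (gammaPhoton m) (fun t => ![0, 0, a t, 0]) =
      fun t => ![0, 0, deriv a t, 0] :=
    funext fun t => funext (covDeriv_schwarzschild_gammaPhoton_theta hm a t)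
  rw [hD, covDeriv_schwarzschild_gammaPhoton_theta hm,
    riemann_schwarzschild_gammaPhoton_theta hm]
  fin_cases μ <;> simp

end PhotonSphere

/-- Section 3.1.1 of the paper: along the photon sphere geodesic `γ` of
Schwarzschild, `∂_θ` is parallel, `R(∂_θ, γ̇)γ̇ = (27m²)^{-1} ∂_θ`, and consequently
`J(s) = (27m²)^{1/2} sin((27m²)^{-1/2} s) ∂_θ` is a nontrivial Jacobi field vanishing
at `s = 0` and `s = π (27m²)^{1/2}`; hence `γ(0)` and `γ(π (27m²)^{1/2})` are
conjugate points along `γ`. -/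
theorem photon_sphere_conjugate_points (m : ℝ) (hm : 0 < m) :
    -- (i) ∂_θ is parallel along γ
    (∀ (s : ℝ) (μ : Fin 4),
      covDeriv (schwarzschild m) (gammaPhoton m) (fun _ => ![0, 0, 1, 0]) s μ = 0) ∧
    -- (ii) R(∂_θ, γ̇)γ̇ = (27m²)⁻¹ ∂_θ
    (∀ (s : ℝ) (μ : Fin 4),
      riemann (schwarzschild m) ![0, 0, 1, 0] (gammaPhoton' m s) (gammaPhoton' m s)
          (gammaPhoton m s) μ =
        (27 * m ^ 2)⁻¹ * (![0, 0, 1, 0] : Fin 4 → ℝ) μ) ∧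
    -- (iii) J satisfies the Jacobi equation, is nontrivial, and vanishes at the ends
    (∀ (s : ℝ) (μ : Fin 4),
      covDeriv (schwarzschild m) (gammaPhoton m)
          (covDeriv (schwarzschild m) (gammaPhoton m) (jacobiPhoton m)) s μ
        + riemann (schwarzschild m) (jacobiPhoton m s) (gammaPhoton' m s)
            (gammaPhoton' m s) (gammaPhoton m s) μ = 0) ∧
    (∃ (s : ℝ) (μ : Fin 4), jacobiPhoton m s μ ≠ 0) ∧
    (∀ μ : Fin 4, jacobiPhoton m 0 μ = 0) ∧
    (∀ μ : Fin 4, jacobiPhoton m (Real.pi * Real.sqrt (27 * m ^ 2)) μ = 0) ∧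
    -- hence γ(0) and γ(π√(27m²)) are conjugate along γ
    (∃ K : ℝ → Fin 4 → ℝ,
      (∀ (s : ℝ) (μ : Fin 4),
        covDeriv (schwarzschild m) (gammaPhoton m)
            (covDeriv (schwarzschild m) (gammaPhoton m) K) s μ
          + riemann (schwarzschild m) (K s) (gammaPhoton' m s) (gammaPhoton' m s)
              (gammaPhoton m s) μ = 0) ∧
      (∃ (s : ℝ) (μ : Fin 4), K s μ ≠ 0) ∧
      (∀ μ : Fin 4, K 0 μ = 0) ∧
      (∀ μ : Fin 4, K (Real.pi * Real.sqrt (27 * m ^ 2)) μ = 0)) := by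
  set L := √(27 * m ^ 2)
  have hL : L ≠ 0 := by positivity
  have hL2 : L⁻¹ ^ 2 = (27 * m ^ 2)⁻¹ := by rw [inv_pow, sq_sqrt (by positivity)]
  have hJ : jacobiPhoton m = fun t => ![0, 0, L * sin (L⁻¹ * t), 0] := rfl
  have hjacobi (s : ℝ) (μ : Fin 4) :
      covDeriv (schwarzschild m) (gammaPhoton m)
          (covDeriv (schwarzschild m) (gammaPhoton m) (jacobiPhoton m)) s μ
        + riemann (schwarzschild m) (jacobiPhoton m s) (gammaPhoton' m s)
            (gammaPhoton' m s) (gammaPhoton m s) μ = 0 := by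
    simp only [hJ, jacobi_schwarzschild_gammaPhoton_theta hm,
      deriv_deriv_const_mul_sin_const_mul, hL2]
    fin_cases μ <;> simp
  have hJ0 (μ : Fin 4) : jacobiPhoton m 0 μ = 0 := by fin_cases μ <;> simp [hJ]
  have hJπ (μ : Fin 4) : jacobiPhoton m (π * L) μ = 0 := by
    have : L⁻¹ * (π * L) = π := by field_simp
    fin_cases μ <;> simp [hJ, this]
  have hJne : jacobiPhoton m (π / 2 * L) 2 ≠ 0 := by
    simp [hJ, hL, mul_comm]
  exact ⟨fun s μ => (covDeriv_schwarzschild_gammaPhoton_theta hm (fun _ => 1) s μ).trans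
      (by fin_cases μ <;> simp),
    fun s μ => riemann_schwarzschild_gammaPhoton_theta hm s 1 μ,
    hjacobi, ⟨_, _, hJne⟩, hJ0, hJπ, jacobiPhoton m, hjacobi, ⟨_, _, hJne⟩, hJ0, hJπ⟩
end

section
/- Let m > 0 and D(r) := (1 − m/r)². Define F : (0, m) → ℝ by F(r) := r + m·log((r − m)²) − m²/(r − m). Then: (i) F is differentiable with F′(r) = 1/D(r) for all r ∈ (0, m) (so F is a tortoise coordinate in the extremal Reissner–Nordström black hole interior); (ii) lim_{r → m⁻} D(r) · F(r)² = m²; in particular 1/D(r) blows up only like F(r)² as r → m, i.e. quadratically in the tortoise coordinate (the merely polynomial blue-shift rate at the extremal Cauchy horizon, in contrast to the exponential rate in the sub-extremal case). -/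
/-!
Writing `u = r - m`, one has `F' = 1 + 2m/u + m²/u² = (u + m)²/u² = r²/(r - m)² = 1/D`.
Near the horizon `u F(r) = u r + 2m · u log u - m² → -m²`, because `x ↦ x log x` is continuous
on all of `ℝ` (Mathlib's `log` is `log |·|`) and vanishes at `0`; hence
`D F² = (u F)² / r² → m⁴ / m² = m²`, even as a two-sided limit.
-/

open Real Filter Topology

noncomputable def extremalTortoise (m r : ℝ) : ℝ :=
  r + m * log ((r - m) ^ 2) - m ^ 2 / (r - m)

theorem hasDerivAt_extremalTortoise (m : ℝ) {r : ℝ} (hr : r ≠ 0) (hrm : r ≠ m) :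
    HasDerivAt (extremalTortoise m) ((1 - m / r) ^ 2)⁻¹ r := by
  have hu : r - m ≠ 0 := sub_ne_zero.2 hrm
  have hsub : HasDerivAt (fun r => r - m) 1 r := (hasDerivAt_id r).sub_const m
  have hlog := (hsub.fun_pow 2).log (pow_ne_zero 2 hu)
  have hfrac := (hasDerivAt_const r (m ^ 2)).fun_div hsub hu
  have hderiv : HasDerivAt (extremalTortoise m) (1 + m * (2 * (r - m) ^ 1 * 1 / (r - m) ^ 2)
      - (0 * (r - m) - m ^ 2 * 1) / (r - m) ^ 2) r :=
    ((hasDerivAt_id r).add (hlog.const_mul m)).sub hfrac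
  convert hderiv using 1
  field_simp
  ring

theorem sub_mul_extremalTortoise {m r : ℝ} (hrm : r ≠ m) :
    (r - m) * extremalTortoise m r = (r - m) * r + 2 * m * ((r - m) * log (r - m)) - m ^ 2 := by
  have hu : r - m ≠ 0 := sub_ne_zero.2 hrm
  rw [extremalTortoise, log_pow]
  field_simp
  ring

theorem tendsto_sub_mul_extremalTortoise (m : ℝ) :
    Tendsto (fun r => (r - m) * extremalTortoise m r) (𝓝[≠] m) (𝓝 (-m ^ 2)) := by
  have hcont : Continuous fun r => (r - m) * r + 2 * m * ((r - m) * log (r - m)) - m ^ 2 := by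
    have := continuous_mul_log.comp (continuous_sub_right m)
    fun_prop
  have hlim := (hcont.tendsto m).mono_left (nhdsWithin_le_nhds (s := {m}ᶜ))
  simp only [sub_self, zero_mul, mul_zero, add_zero, zero_sub] at hlim
  refine hlim.congr' ?_
  filter_upwards [self_mem_nhdsWithin] with r hr
  exact (sub_mul_extremalTortoise hr).symm

theorem tendsto_blueshift_mul_extremalTortoise_sq {m : ℝ} (hm : m ≠ 0) :
    Tendsto (fun r => (1 - m / r) ^ 2 * extremalTortoise m r ^ 2) (𝓝[≠] m) (𝓝 (m ^ 2)) := by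
  have hr : Tendsto (fun r : ℝ => r ^ 2) (𝓝[≠] m) (𝓝 (m ^ 2)) :=
    ((continuous_pow 2).tendsto m).mono_left nhdsWithin_le_nhds
  have hlim := ((tendsto_sub_mul_extremalTortoise m).pow 2).div hr (pow_ne_zero 2 hm)
  rw [show (-m ^ 2) ^ 2 / m ^ 2 = m ^ 2 by field_simp] at hlim
  refine hlim.congr' ?_
  filter_upwards [nhdsWithin_le_nhds (eventually_ne_nhds hm)] with r hr0
  simp only [Pi.div_apply]
  field_simp

/-- Section 3.1.4 of the paper: the tortoise coordinate
`F(r) = r + m log((r-m)²) - m²/(r-m)` in the extremal Reissner–Nordström interior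
satisfies `F' = 1/D` with `D(r) = (1 - m/r)²`, and `D(r) F(r)² → m²` as `r → m⁻`:
the blue-shift at the extremal Cauchy horizon is only quadratic in the tortoise
coordinate. -/
theorem extremal_tortoise_quadratic_blueshift
    (m : ℝ) (hm : 0 < m)
    (F : ℝ → ℝ)
    (hF : ∀ r : ℝ, F r = r + m * Real.log ((r - m) ^ 2) - m ^ 2 / (r - m)) :
    -- (i) F is a tortoise coordinate: F' = 1/D
    (∀ r ∈ Set.Ioo (0 : ℝ) m, HasDerivAt F ((1 - m / r) ^ 2)⁻¹ r) ∧
    -- (ii) D(r) F(r)² → m² as r → m⁻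
    Filter.Tendsto (fun r : ℝ => (1 - m / r) ^ 2 * (F r) ^ 2)
      (nhdsWithin m (Set.Ioo (0 : ℝ) m)) (nhds (m ^ 2)) := by
  obtain rfl : F = extremalTortoise m := funext hF
  refine ⟨fun r hr => hasDerivAt_extremalTortoise m hr.1.ne' hr.2.ne, ?_⟩
  exact (tendsto_blueshift_mul_extremalTortoise_sq hm.ne').mono_left
    (nhdsWithin_mono m fun r hr => hr.2.ne)
end
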